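/- arXiv:1906.00854 — 7 statements merged into one kernel-verified Lean document; each statement's English description precedes it below -/
import Mathlib

section
/- Fix n ≥ 2 servers with convex, nondecreasing, continuously differentiable delay functions having equal uncongested delays, and fix an attack strength α ≥ 0. If x̃ is a team equilibrium with machine penetration level r and x̃′ is a team equilibrium with machine penetration level r′, where r > r′, then C^α(x̃) ≤ C^α(x̃′). In particular, every team equilibrium has cost no greater than that of a fully selfish equilibrium (the case r′ = 0). -/
open Finset

/-- System cost `C^α(x) = (1/n) ∑ᵢ xᵢ τᵢ(xᵢ) + α x₁ / n` (server 1 is index 0). -/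
noncomputable def cost (n : ℕ) [NeZero n] (τ : Fin n → ℝ → ℝ) (α : ℝ) (x : Fin n → ℝ) : ℝ :=
  (∑ i, x i * τ i (x i)) / (n : ℝ) + α * x 0 / (n : ℝ)

/-- Attacked delay functions: `τ₁^α = τ₁ + α`, `τᵢ^α = τᵢ` for `i > 1`. -/
noncomputable def tauA (n : ℕ) [NeZero n] (τ : Fin n → ℝ → ℝ) (α : ℝ) (i : Fin n) (z : ℝ) : ℝ :=
  τ i z + if i = 0 then α else 0

/-- A (partial) scheduling profile of total mass `mass`: nonnegative with entries summing to `mass`. -/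
def IsProfile (n : ℕ) (mass : ℝ) (x : Fin n → ℝ) : Prop :=
  (∀ i, 0 ≤ x i) ∧ ∑ i, x i = mass

/-- Team equilibrium: the selfish mass `n - ∑ r k` is scheduled by `xs`, machine `k`
schedules mass `r k` via `xk k`; every machine schedules globally optimally given the
others, and every selfish job is on a minimum-delay server. -/
def IsTeamEq (n m : ℕ) [NeZero n] (τ : Fin n → ℝ → ℝ) (α : ℝ) (r : Fin m → ℝ)
    (xs : Fin n → ℝ) (xk : Fin m → Fin n → ℝ) : Prop :=
  IsProfile n ((n : ℝ) - ∑ k, r k) xs ∧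
  (∀ k, IsProfile n (r k) (xk k)) ∧
  (∀ k, ∀ y : Fin n → ℝ, IsProfile n (r k) y →
    cost n τ α (xs + ∑ j, xk j) ≤ cost n τ α (xs + y + ∑ j ∈ univ.erase k, xk j)) ∧
  (∀ i, 0 < xs i → ∀ j,
    tauA n τ α i ((xs + ∑ l, xk l) i) ≤ tauA n τ α j ((xs + ∑ l, xk l) j))

/-!
Write `n · C^α(x) = ∑ᵢ Gᵢ(xᵢ)` with `Gᵢ(t) = t τᵢ^α(t)`. Since `τᵢ^α` is convex and nondecreasing
on `[0, ∞)`, secant slopes of `Gᵢ` increase, and across a gap they increase by at least the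
increase of `τᵢ^α` itself. Let `x` and `y` be the equilibria at penetration levels `r > r'`.

First, a selfish job of `x` sees a delay no larger than any delay in `y`: otherwise `y`, having
more selfish mass, puts more of it than `x` on some server `w` with `y_w < x_w`, and on a server
`j` with `x_j < y_j` the load of `y` is partly machine-scheduled. A machine of `x` does not gain
by moving load from `w` to `j`, nor a machine of `y` from `j` to `w`; chained through the convexity
of `G_j` this contradicts the strict slope gain `τ_w^α(x_w) - τ_w^α(y_w) > 0` of `G_w`.

Then on every server `i` with `y_i < x_i` the slope of `Gᵢ` on `[y_i, x_i]` is at most that of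
`G_p` on `[x_p, y_p]` for every `p` with `x_p < y_p`: machine mass on `i` would otherwise move to
`p`, and selfish mass on `i` sees the least delay of `x`, which `y` does not undercut. A slope
separating the two groups supports every `Gᵢ` along the move from `x` to `y`, and these supporting
lines sum to zero since `x` and `y` have the same total mass.
-/

section Slope

variable {𝕜 : Type*} [Field 𝕜] {s : Set 𝕜} {f : 𝕜 → 𝕜} {a a' b' b : 𝕜}

theorem slope_mul_self_eq_right_add (hab : a ≠ b) :
    slope (fun t => t * f t) a b = f b + a * slope f a b := by
  rw [slope_def_field, slope_def_field]
  field_simp [sub_ne_zero.2 hab.symm]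
  ring

theorem slope_mul_self_eq_left_add (hab : a ≠ b) :
    slope (fun t => t * f t) a b = f a + b * slope f a b := by
  rw [slope_def_field, slope_def_field]
  field_simp [sub_ne_zero.2 hab.symm]
  ring

variable [LinearOrder 𝕜] [IsStrictOrderedRing 𝕜]

theorem ConvexOn.slope_le_slope (hf : ConvexOn 𝕜 s f) (ha : a ∈ s) (hb : b ∈ s)
    (haa' : a < a') (hb'b : b' < b) (hab' : a ≤ b') (ha'b : a' ≤ b) :
    slope f a a' ≤ slope f b' b := by
  have ha' : a' ∈ s := hf.1.ordConnected.out ha hb ⟨haa'.le, ha'b⟩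
  have hb' : b' ∈ s := hf.1.ordConnected.out ha hb ⟨hab', hb'b.le⟩
  calc slope f a a' ≤ slope f a b :=
        hf.slope_mono ha ⟨ha', haa'.ne'⟩ ⟨hb, (haa'.trans_le ha'b).ne'⟩ ha'b
    _ = slope f b a := slope_comm f a b
    _ ≤ slope f b b' := hf.slope_mono hb ⟨ha, (haa'.trans_le ha'b).ne⟩ ⟨hb', hb'b.ne⟩ hab'
    _ = slope f b' b := slope_comm f b b'

theorem slope_mul_self_le_of_le (ha : 0 ≤ a) (hab : a < b) (hf : f b ≤ f a) :
    slope (fun t => t * f t) a b ≤ f b := by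
  rw [slope_mul_self_eq_right_add hab.ne]
  linarith [mul_nonpos_of_nonneg_of_nonpos ha ((slope_nonpos_iff_of_le hab.le).2 hf)]

theorem le_slope_mul_self_of_le (hb : 0 ≤ b) (hab : a < b) (hf : f a ≤ f b) :
    f a ≤ slope (fun t => t * f t) a b := by
  rw [slope_mul_self_eq_left_add hab.ne]
  linarith [mul_nonneg hb ((slope_nonneg_iff_of_le hab.le).2 hf)]

theorem slope_mul_self_le_slope (hfc : ConvexOn 𝕜 (Set.Ici 0) f)
    (hfm : MonotoneOn f (Set.Ici 0)) (ha : 0 ≤ a) (haa' : a < a') (hb'b : b' < b)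
    (hab' : a ≤ b') (ha'b : a' ≤ b) :
    slope (fun t => t * f t) a a' ≤ slope (fun t => t * f t) b' b := by
  have hb : (0 : 𝕜) ≤ b := ha.trans (haa'.le.trans ha'b)
  have hσ := hfc.slope_le_slope ha hb haa' hb'b hab' ha'b
  have hσ₀ := hfm.slope_nonneg ha (ha.trans haa'.le : (0 : 𝕜) ≤ a')
  rw [slope_mul_self_eq_right_add haa'.ne, slope_mul_self_eq_right_add hb'b.ne]
  exact add_le_add (hfm (ha.trans haa'.le) hb ha'b) (mul_le_mul hab' hσ hσ₀ (ha.trans hab'))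

theorem slope_mul_self_add_sub_le_slope (hfc : ConvexOn 𝕜 (Set.Ici 0) f)
    (hfm : MonotoneOn f (Set.Ici 0)) (ha : 0 ≤ a) (haa' : a < a') (ha'b' : a' ≤ b')
    (hb'b : b' < b) :
    slope (fun t => t * f t) a a' + (f b - f a) ≤ slope (fun t => t * f t) b' b := by
  have hb' : (0 : 𝕜) ≤ b' := ha.trans (haa'.le.trans ha'b')
  have hσ := hfc.slope_le_slope ha (hb'.trans hb'b.le) haa' hb'b (haa'.le.trans ha'b')
    (ha'b'.trans hb'b.le)
  have hσ₀ := hfm.slope_nonneg ha (ha.trans haa'.le : (0 : 𝕜) ≤ a')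
  rw [slope_mul_self_eq_left_add haa'.ne, slope_mul_self_eq_right_add hb'b.ne]
  linarith [mul_le_mul ha'b' hσ hσ₀ hb']

end Slope

section FiniteSums

variable {ι : Type*} [Fintype ι]

theorem exists_lt_of_sum_eq_of_lt {M : Type*} [AddCommMonoid M] [LinearOrder M]
    [IsOrderedCancelAddMonoid M] {x y : ι → M} (hsum : ∑ i, x i = ∑ i, y i) {w : ι}
    (hw : y w < x w) : ∃ j, x j < y j := by
  by_contra! h
  exact (sum_lt_sum (fun i _ => h i) ⟨w, mem_univ w, hw⟩).ne hsum.symm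

theorem sum_comp_add_single_sub_single [DecidableEq ι] (g : ι → ℝ → ℝ) (x : ι → ℝ) {w j : ι}
    (hwj : w ≠ j) (ε : ℝ) :
    ∑ i, g i ((x + Pi.single j ε - Pi.single w ε : ι → ℝ) i) =
      ∑ i, g i (x i) + (g j (x j + ε) - g j (x j)) - (g w (x w) - g w (x w - ε)) := by
  have hdiff : ∑ i, (g i ((x + Pi.single j ε - Pi.single w ε : ι → ℝ) i) - g i (x i)) =
      (g j (x j + ε) - g j (x j)) + (g w (x w - ε) - g w (x w)) := by
    rw [Fintype.sum_eq_add j w hwj.symm fun i hi => by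
      simp [Pi.single_eq_of_ne hi.1, Pi.single_eq_of_ne hi.2]]
    simp [Pi.single_eq_of_ne hwj, Pi.single_eq_of_ne hwj.symm]
  rw [sum_sub_distrib] at hdiff
  linarith

theorem sum_le_sum_of_slope_le_slope (g : ι → ℝ → ℝ) {x y : ι → ℝ}
    (hsum : ∑ i, x i = ∑ i, y i)
    (hslope : ∀ i p, y i < x i → x p < y p →
      slope (g i) (y i) (x i) ≤ slope (g p) (x p) (y p)) :
    ∑ i, g i (x i) ≤ ∑ i, g i (y i) := by
  classical
  obtain ⟨κ, hdown, hup⟩ : ∃ κ, (∀ i, y i < x i → slope (g i) (y i) (x i) ≤ κ) ∧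
      ∀ p, x p < y p → κ ≤ slope (g p) (x p) (y p) := by
    by_cases hU : (univ.filter fun p => x p < y p).Nonempty
    · exact ⟨_, fun i hi => le_inf' hU _ fun p hp => hslope i p hi (mem_filter.1 hp).2,
        fun p hp => inf'_le (fun p => slope (g p) (x p) (y p)) (mem_filter.2 ⟨mem_univ p, hp⟩)⟩
    · refine ⟨0, fun i hi => ?_, fun p hp => (hU ⟨p, mem_filter.2 ⟨mem_univ p, hp⟩⟩).elim⟩
      obtain ⟨p, hp⟩ := exists_lt_of_sum_eq_of_lt hsum hi
      exact (hU ⟨p, mem_filter.2 ⟨mem_univ p, hp⟩⟩).elim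
  have hsupport : ∀ i, κ * (y i - x i) ≤ g i (y i) - g i (x i) := by
    intro i
    rcases lt_trichotomy (x i) (y i) with h | h | h
    · have := hup i h
      rwa [slope_def_field, le_div_iff₀ (sub_pos.2 h)] at this
    · simp [h]
    · have := hdown i h
      rw [slope_def_field, div_le_iff₀ (sub_pos.2 h)] at this
      linarith
  have := sum_le_sum fun i (_ : i ∈ univ) => hsupport i
  rw [← mul_sum, sum_sub_distrib, sum_sub_distrib, hsum, sub_self, mul_zero] at this
  exact sub_nonneg.1 this

end FiniteSums

theorem IsProfile.add_single_sub_single {n : ℕ} {s : ℝ} {z : Fin n → ℝ} (hz : IsProfile n s z)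
    {w j : Fin n} {ε : ℝ} (hε : 0 ≤ ε) (hεw : ε ≤ z w) :
    IsProfile n s (z + Pi.single j ε - Pi.single w ε) := by
  refine ⟨fun i => ?_, by simp [sum_add_distrib, sum_sub_distrib, hz.2]⟩
  have hj : 0 ≤ (Pi.single j ε : Fin n → ℝ) i := by
    rw [Pi.single_apply]; split_ifs <;> simp [hε]
  rcases eq_or_ne i w with rfl | hiw
  · simp only [Pi.sub_apply, Pi.add_apply, Pi.single_eq_same]
    linarith
  · simp only [Pi.sub_apply, Pi.add_apply, Pi.single_eq_of_ne hiw, sub_zero]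
    linarith [hz.1 i]

/-- The contribution `t τᵢ^α(t)` of server `i` to `n` times the system cost. -/
noncomputable def serverCost (n : ℕ) [NeZero n] (τ : Fin n → ℝ → ℝ) (α : ℝ) (i : Fin n)
    (t : ℝ) : ℝ :=
  t * tauA n τ α i t

section TeamEquilibrium

variable {n m : ℕ} [NeZero n] {τ : Fin n → ℝ → ℝ} {α : ℝ}

theorem cost_eq_sum_serverCost_div (x : Fin n → ℝ) :
    cost n τ α x = (∑ i, serverCost n τ α i (x i)) / n := by
  simp only [cost, serverCost, tauA, mul_add, sum_add_distrib, mul_ite, mul_zero,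
    sum_ite_eq', mem_univ, if_true]
  ring

theorem convexOn_tauA {i : Fin n} (hconv : ConvexOn ℝ (Set.Ici 0) (τ i)) :
    ConvexOn ℝ (Set.Ici 0) (tauA n τ α i) :=
  hconv.add_const _

theorem monotoneOn_tauA {i : Fin n} (hmono : MonotoneOn (τ i) (Set.Ici 0)) :
    MonotoneOn (tauA n τ α i) (Set.Ici 0) :=
  fun _ ha _ hb hab => add_le_add_left (hmono ha hb hab) _

namespace IsTeamEq

variable {r : Fin m → ℝ} {xs : Fin n → ℝ} {xk : Fin m → Fin n → ℝ}

theorem selfish_le_total (heq : IsTeamEq n m τ α r xs xk) (i : Fin n) :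
    xs i ≤ (xs + ∑ l, xk l) i := by
  simpa using sum_nonneg fun l (_ : l ∈ univ) => (heq.2.1 l).1 i

theorem isProfile_total (heq : IsTeamEq n m τ α r xs xk) :
    IsProfile n n (xs + ∑ l, xk l) := by
  refine ⟨fun i => (heq.1.1 i).trans (heq.selfish_le_total i), ?_⟩
  simp only [Pi.add_apply, Finset.sum_apply, sum_add_distrib, heq.1.2]
  rw [sum_comm, sum_congr rfl fun l _ => (heq.2.1 l).2]
  ring

theorem exists_exchange (heq : IsTeamEq n m τ α r xs xk) {w j : Fin n}
    (hw : xs w < (xs + ∑ l, xk l) w) (hwj : w ≠ j) {δ : ℝ} (hδ : 0 < δ) :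
    ∃ ε, 0 < ε ∧ ε ≤ δ ∧
      slope (serverCost n τ α w) ((xs + ∑ l, xk l) w - ε) ((xs + ∑ l, xk l) w) ≤
        slope (serverCost n τ α j) ((xs + ∑ l, xk l) j) ((xs + ∑ l, xk l) j + ε) := by
  classical
  set x := xs + ∑ l, xk l with hx
  obtain ⟨k, -, hk⟩ := exists_lt_of_sum_lt (s := univ) (f := fun _ => (0 : ℝ))
    (g := fun l => xk l w) (by simpa [hx] using hw)
  set ε := min (xk k w) δ
  have hε : 0 < ε := lt_min hk hδ
  refine ⟨ε, hε, min_le_right _ _, ?_⟩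
  have hdev : xs + (xk k + Pi.single j ε - Pi.single w ε) + ∑ l ∈ univ.erase k, xk l =
      x + Pi.single j ε - Pi.single w ε := by
    rw [hx, ← add_sum_erase univ xk (mem_univ k)]
    abel
  have hopt := heq.2.2.1 k _ ((heq.2.1 k).add_single_sub_single (j := j) hε.le (min_le_left _ _))
  rw [hdev, ← hx, cost_eq_sum_serverCost_div, cost_eq_sum_serverCost_div,
    sum_comp_add_single_sub_single _ _ hwj,
    div_le_div_iff_of_pos_right (Nat.cast_pos.2 (NeZero.pos n))] at hopt
  rw [slope_def_field, slope_def_field, sub_sub_cancel, add_sub_cancel_left]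
  exact div_le_div_of_nonneg_right (by linarith) hε.le

theorem tauA_le_of_machines (hconv : ∀ i, ConvexOn ℝ (Set.Ici 0) (τ i))
    (hmono : ∀ i, MonotoneOn (τ i) (Set.Ici 0)) {m' : ℕ} {r' : Fin m' → ℝ} {ys : Fin n → ℝ}
    {yk : Fin m' → Fin n → ℝ} (heq : IsTeamEq n m τ α r xs xk)
    (heq' : IsTeamEq n m' τ α r' ys yk) {w j : Fin n} (hwj : w ≠ j)
    (hmach_x : xs w < (xs + ∑ l, xk l) w) (hmach_y : ys j < (ys + ∑ l, yk l) j)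
    (hw : (ys + ∑ l, yk l) w < (xs + ∑ l, xk l) w)
    (hj : (xs + ∑ l, xk l) j < (ys + ∑ l, yk l) j) :
    tauA n τ α w ((xs + ∑ l, xk l) w) ≤ tauA n τ α w ((ys + ∑ l, yk l) w) := by
  set x := xs + ∑ l, xk l
  set y := ys + ∑ l, yk l
  set δ := min ((x w - y w) / 2) ((y j - x j) / 2)
  have hδ : 0 < δ := lt_min (by linarith) (by linarith)
  have hδw : δ ≤ (x w - y w) / 2 := min_le_left _ _
  have hδj : δ ≤ (y j - x j) / 2 := min_le_right _ _
  obtain ⟨ε, hε, hεδ, hexch_x⟩ := heq.exists_exchange hmach_x hwj hδ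
  obtain ⟨ε', hε', hε'δ, hexch_y⟩ := heq'.exists_exchange hmach_y hwj.symm hδ
  have hslope_j : slope (serverCost n τ α j) (x j) (x j + ε) ≤
      slope (serverCost n τ α j) (y j - ε') (y j) :=
    slope_mul_self_le_slope (convexOn_tauA (hconv j)) (monotoneOn_tauA (hmono j))
      (heq.isProfile_total.1 j) (by linarith) (by linarith) (by linarith) (by linarith)
  have hslope_w : slope (serverCost n τ α w) (y w) (y w + ε') +
      (tauA n τ α w (x w) - tauA n τ α w (y w)) ≤ slope (serverCost n τ α w) (x w - ε) (x w) :=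
    slope_mul_self_add_sub_le_slope (convexOn_tauA (hconv w)) (monotoneOn_tauA (hmono w))
      (heq'.isProfile_total.1 w) (by linarith) (by linarith) (by linarith)
  -- `hexch_x`, `hslope_j` and `hexch_y` chain the two slopes of `hslope_w` the other way round
  linarith

theorem selfish_delay_le (hconv : ∀ i, ConvexOn ℝ (Set.Ici 0) (τ i))
    (hmono : ∀ i, MonotoneOn (τ i) (Set.Ici 0)) {m' : ℕ} {r' : Fin m' → ℝ} {ys : Fin n → ℝ}
    {yk : Fin m' → Fin n → ℝ} (heq : IsTeamEq n m τ α r xs xk)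
    (heq' : IsTeamEq n m' τ α r' ys yk) (hlt : ∑ k, r' k < ∑ k, r k) {i : Fin n}
    (hi : 0 < xs i) (q : Fin n) :
    tauA n τ α i ((xs + ∑ l, xk l) i) ≤ tauA n τ α q ((ys + ∑ l, yk l) q) := by
  set x := xs + ∑ l, xk l
  set y := ys + ∑ l, yk l
  have hx := heq.isProfile_total
  have hy := heq'.isProfile_total
  by_contra! hqi
  have hlow : ∀ p, tauA n τ α q (y q) < tauA n τ α p (x p) := fun p =>
    hqi.trans_le (heq.2.2.2 i hi p)
  -- `y` has more selfish mass, so some server `w` carries more of it under `y` than under `x`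
  obtain ⟨w, -, hw⟩ := exists_lt_of_sum_lt (s := univ) (f := xs) (g := ys)
    (by rw [heq.1.2, heq'.1.2]; linarith)
  have hyw : ∀ p, tauA n τ α w (y w) ≤ tauA n τ α p (y p) :=
    heq'.2.2.2 w ((heq.1.1 w).trans_lt hw)
  have hyx_w : y w < x w := by
    by_contra! h
    exact (hlow w).not_ge ((monotoneOn_tauA (hmono w) (hx.1 w) (hy.1 w) h).trans (hyw q))
  obtain ⟨j, hxy_j⟩ := exists_lt_of_sum_eq_of_lt (hx.2.trans hy.2.symm) hyx_w
  have hwj : w ≠ j := by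
    rintro rfl
    exact lt_asymm hyx_w hxy_j
  have hmach_y : ys j < y j := by
    refine (heq'.selfish_le_total j).lt_of_ne fun h => (hlow j).not_ge ?_
    calc tauA n τ α j (x j) ≤ tauA n τ α j (y j) :=
          monotoneOn_tauA (hmono j) (hx.1 j) (hy.1 j) hxy_j.le
      _ ≤ tauA n τ α w (y w) := heq'.2.2.2 j (h ▸ (hx.1 j).trans_lt hxy_j) w
      _ ≤ tauA n τ α q (y q) := hyw q
  have hmach_x : xs w < x w := hw.trans_le ((heq'.selfish_le_total w).trans hyx_w.le)
  exact (hlow w).not_ge ((heq.tauA_le_of_machines hconv hmono heq' hwj hmach_x hmach_y hyx_w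
    hxy_j).trans (hyw q))

theorem slope_serverCost_le_slope (hconv : ∀ i, ConvexOn ℝ (Set.Ici 0) (τ i))
    (hmono : ∀ i, MonotoneOn (τ i) (Set.Ici 0)) (heq : IsTeamEq n m τ α r xs xk)
    {y : Fin n → ℝ} (hy : ∀ i, 0 ≤ y i)
    (hdelay : ∀ i, 0 < xs i → tauA n τ α i ((xs + ∑ l, xk l) i) ≤ tauA n τ α i (y i))
    {i p : Fin n} (hi : y i < (xs + ∑ l, xk l) i) (hp : (xs + ∑ l, xk l) p < y p) :
    slope (serverCost n τ α i) (y i) ((xs + ∑ l, xk l) i) ≤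
      slope (serverCost n τ α p) ((xs + ∑ l, xk l) p) (y p) := by
  set x := xs + ∑ l, xk l
  have hx := heq.isProfile_total
  have hip : i ≠ p := by
    rintro rfl
    exact lt_asymm hi hp
  rcases (heq.selfish_le_total i).lt_or_eq with hmach | hself
  · set δ := min (x i - y i) (y p - x p)
    obtain ⟨ε, hε, hεδ, hexch⟩ :=
      heq.exists_exchange hmach hip (lt_min (by linarith) (by linarith) : 0 < δ)
    have hδi : δ ≤ x i - y i := min_le_left _ _
    have hδp : δ ≤ y p - x p := min_le_right _ _
    calc slope (serverCost n τ α i) (y i) (x i)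
        ≤ slope (serverCost n τ α i) (x i - ε) (x i) :=
          slope_mul_self_le_slope (convexOn_tauA (hconv i)) (monotoneOn_tauA (hmono i)) (hy i)
            hi (by linarith) (by linarith) le_rfl
      _ ≤ slope (serverCost n τ α p) (x p) (x p + ε) := hexch
      _ ≤ slope (serverCost n τ α p) (x p) (y p) :=
          slope_mul_self_le_slope (convexOn_tauA (hconv p)) (monotoneOn_tauA (hmono p)) (hx.1 p)
            (by linarith) hp le_rfl (by linarith)
  · have hxs : 0 < xs i := hself ▸ (hy i).trans_lt hi
    calc slope (serverCost n τ α i) (y i) (x i) ≤ tauA n τ α i (x i) :=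
          slope_mul_self_le_of_le (hy i) hi (hdelay i hxs)
      _ ≤ tauA n τ α p (x p) := heq.2.2.2 i hxs p
      _ ≤ slope (serverCost n τ α p) (x p) (y p) :=
          le_slope_mul_self_of_le (hy p) hp (monotoneOn_tauA (hmono p) (hx.1 p) (hy p) hp.le)

end IsTeamEq

end TeamEquilibrium

theorem team_equilibrium_cost_monotone_general (n : ℕ) [NeZero n]
    (τ : Fin n → ℝ → ℝ)
    (hconv : ∀ i, ConvexOn ℝ (Set.Ici 0) (τ i))
    (hmono : ∀ i, MonotoneOn (τ i) (Set.Ici 0))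
    (α : ℝ)
    (m m' : ℕ)
    (r : Fin m → ℝ) (r' : Fin m' → ℝ)
    (hlt : ∑ k, r' k < ∑ k, r k)
    (xs : Fin n → ℝ) (xk : Fin m → Fin n → ℝ)
    (xs' : Fin n → ℝ) (xk' : Fin m' → Fin n → ℝ)
    (heq : IsTeamEq n m τ α r xs xk) (heq' : IsTeamEq n m' τ α r' xs' xk') :
    cost n τ α (xs + ∑ j, xk j) ≤ cost n τ α (xs' + ∑ j, xk' j) := by
  rw [cost_eq_sum_serverCost_div, cost_eq_sum_serverCost_div]
  refine div_le_div_of_nonneg_right ?_ n.cast_nonneg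
  exact sum_le_sum_of_slope_le_slope _
    (heq.isProfile_total.2.trans heq'.isProfile_total.2.symm) fun i p hi hp =>
    heq.slope_serverCost_le_slope hconv hmono heq'.isProfile_total.1
      (fun i hi => heq.selfish_delay_le hconv hmono heq' hlt hi i) hi hp

/-- team equilibrium cost is monotone nonincreasing in the machine
penetration level; in particular no worse than a fully selfish equilibrium. -/
theorem team_equilibrium_cost_monotone (n : ℕ) [NeZero n] (hn : 2 ≤ n)
    (τ : Fin n → ℝ → ℝ)
    (hconv : ∀ i, ConvexOn ℝ (Set.Ici 0) (τ i))
    (hmono : ∀ i, MonotoneOn (τ i) (Set.Ici 0))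
    (hsmooth : ∀ i, ContDiffOn ℝ 1 (τ i) (Set.Ici 0))
    (hzero : ∀ i j, τ i 0 = τ j 0)
    (α : ℝ) (hα : 0 ≤ α)
    (m m' : ℕ) (hm : 1 ≤ m) (hm' : 1 ≤ m')
    (r : Fin m → ℝ) (r' : Fin m' → ℝ)
    (hr : ∀ k, 0 ≤ r k) (hr' : ∀ k, 0 ≤ r' k)
    (hrsum : ∑ k, r k ≤ (n : ℝ)) (hrsum' : ∑ k, r' k ≤ (n : ℝ))
    (hlt : ∑ k, r' k < ∑ k, r k)
    (xs : Fin n → ℝ) (xk : Fin m → Fin n → ℝ)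
    (xs' : Fin n → ℝ) (xk' : Fin m' → Fin n → ℝ)
    (heq : IsTeamEq n m τ α r xs xk) (heq' : IsTeamEq n m' τ α r' xs' xk') :
    cost n τ α (xs + ∑ j, xk j) ≤ cost n τ α (xs' + ∑ j, xk' j) :=
  team_equilibrium_cost_monotone_general n τ hconv hmono α m m' r r' hlt xs xk xs' xk' heq heq'
end

section
/- For n ≥ 2 identical linear servers and any α ≥ 0, the scheduling profile x* with x*_1 = max{0, 1 − α(n−1)/(2n)} and x*_i = (n − x*_1)/(n−1) for all i > 1 minimizes C^α over all scheduling profiles x with x ≥ 0 and Σ_i x_i = n. -/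
open Finset

/-- Identical linear delay functions `τᵢ(x) = x`. -/
def lin (n : ℕ) : Fin n → ℝ → ℝ := fun _ z => z

/-!
For a fixed load `s = x₁` on the attacked server, Cauchy–Schwarz shows that `∑ᵢ xᵢ²` is smallest
when the remaining load `n - s` is spread evenly over the other `n - 1` servers. This reduces the
problem to minimising the convex quadratic `s² + (n - s)² / (n - 1) + α s` over `s ≥ 0`, whose
minimiser is its vertex `1 - α (n - 1) / (2n)` clipped at `0`.
-/

noncomputable def starProfile (n : ℕ) [NeZero n] (t : ℝ) : Fin n → ℝ :=
  fun i => if i = 0 then t else ((n : ℝ) - t) / ((n : ℝ) - 1)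

theorem sq_add_sq_sub_div_le_sum_sq {ι : Type*} [Fintype ι] [DecidableEq ι] (x : ι → ℝ) (j : ι) :
    x j ^ 2 + (∑ i, x i - x j) ^ 2 / ((Fintype.card ι : ℝ) - 1) ≤ ∑ i, x i ^ 2 := by
  have hcard : ((univ.erase j).card : ℝ) = (Fintype.card ι : ℝ) - 1 := by
    rw [card_erase_of_mem (mem_univ j), card_univ, Nat.cast_pred (Fintype.card_pos_iff.mpr ⟨j⟩)]
  have hrest : ∑ i ∈ univ.erase j, x i = ∑ i, x i - x j := by
    rw [← add_sum_erase _ x (mem_univ j)]; ring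
  rw [← hrest, ← hcard, ← add_sum_erase _ (fun i => x i ^ 2) (mem_univ j)]
  gcongr
  exact div_le_of_le_mul₀ (Nat.cast_nonneg _) (sum_nonneg fun i _ => sq_nonneg (x i))
    (by rw [mul_comm]; exact sq_sum_le_card_mul_sum_sq)

theorem quadratic_le_at_clipped_vertex {a b s : ℝ} (ha : 0 < a) (hs : 0 ≤ s) :
    a * max 0 (-b / (2 * a)) ^ 2 + b * max 0 (-b / (2 * a)) ≤ a * s ^ 2 + b * s := by
  rcases le_total (-b / (2 * a)) 0 with hv | hv
  · have hb : 0 ≤ b := by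
      rw [div_le_iff₀ (by positivity), zero_mul] at hv
      linarith
    rw [max_eq_left hv]
    nlinarith [sq_nonneg s]
  · rw [max_eq_right hv]
    have hb : b = -2 * a * (-b / (2 * a)) := by field_simp
    nlinarith [mul_nonneg ha.le (sq_nonneg (s - -b / (2 * a)))]

section

variable {n : ℕ} [NeZero n]

theorem cost_lin (α : ℝ) (x : Fin n → ℝ) :
    cost n (lin n) α x = (∑ i, x i ^ 2 + α * x 0) / n := by
  simp only [cost, lin, sq, add_div]

theorem sum_comp_starProfile (f : ℝ → ℝ) (t : ℝ) :
    ∑ i, f (starProfile n t i) = f t + ((n : ℝ) - 1) * f (((n : ℝ) - t) / ((n : ℝ) - 1)) := by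
  rw [← add_sum_erase _ _ (mem_univ 0)]
  have hrest : ∀ i ∈ univ.erase (0 : Fin n),
      f (starProfile n t i) = f (((n : ℝ) - t) / ((n : ℝ) - 1)) := fun i hi => by
    simp [starProfile, (mem_erase.mp hi).1]
  rw [sum_congr rfl hrest, sum_const, card_erase_of_mem (mem_univ 0), card_univ, Fintype.card_fin,
    nsmul_eq_mul, Nat.cast_pred (NeZero.pos n)]
  simp [starProfile]

theorem isProfile_starProfile (hn : 2 ≤ n) {t : ℝ} (ht0 : 0 ≤ t) (htn : t ≤ n) :
    IsProfile n n (starProfile n t) := by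
  have hn1 : (0 : ℝ) < (n : ℝ) - 1 := by
    have : (2 : ℝ) ≤ n := by exact_mod_cast hn
    linarith
  refine ⟨fun i => ?_, ?_⟩
  · unfold starProfile
    split_ifs
    exacts [ht0, div_nonneg (by linarith) hn1.le]
  · refine (sum_comp_starProfile id t).trans ?_
    simp only [id]
    field_simp
    ring

theorem sum_sq_starProfile (t : ℝ) :
    ∑ i, starProfile n t i ^ 2 = t ^ 2 + ((n : ℝ) - t) ^ 2 / ((n : ℝ) - 1) := by
  rw [sum_comp_starProfile (· ^ 2)]
  rcases eq_or_ne ((n : ℝ) - 1) 0 with h | h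
  · simp [h]
  · field_simp

end

noncomputable def reducedCost (N α s : ℝ) : ℝ :=
  s ^ 2 + (N - s) ^ 2 / (N - 1) + α * s

theorem reducedCost_clippedVertex_le {N α s : ℝ} (hN : 1 < N) (hs : 0 ≤ s) :
    reducedCost N α (max 0 (1 - α * (N - 1) / (2 * N))) ≤ reducedCost N α s := by
  have hN1 : N - 1 ≠ 0 := by linarith
  set a := N / (N - 1)
  set b := α - 2 * N / (N - 1)
  have ha : 0 < a := div_pos (by linarith) (by linarith)
  have hq : ∀ u : ℝ, reducedCost N α u = a * u ^ 2 + b * u + N ^ 2 / (N - 1) := by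
    intro u; simp only [reducedCost, a, b]; field_simp; ring
  have hv : -b / (2 * a) = 1 - α * (N - 1) / (2 * N) := by
    simp only [a, b]; field_simp; ring
  rw [hq, hq, ← hv]
  linarith [quadratic_le_at_clipped_vertex (b := b) ha hs]

/-- for identical linear servers, the profile with
`x*₁ = max {0, 1 − α(n−1)/(2n)}` and the rest split evenly minimizes `C^α`. -/
theorem linear_optimal_profile (n : ℕ) [NeZero n] (hn : 2 ≤ n) (α : ℝ) (hα : 0 ≤ α) :
    IsProfile n (n : ℝ)
      (fun i : Fin n => if i = 0 then max 0 (1 - α * ((n : ℝ) - 1) / (2 * n))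
        else ((n : ℝ) - max 0 (1 - α * ((n : ℝ) - 1) / (2 * n))) / ((n : ℝ) - 1)) ∧
    ∀ x : Fin n → ℝ, IsProfile n (n : ℝ) x →
      cost n (lin n) α
        (fun i : Fin n => if i = 0 then max 0 (1 - α * ((n : ℝ) - 1) / (2 * n))
          else ((n : ℝ) - max 0 (1 - α * ((n : ℝ) - 1) / (2 * n))) / ((n : ℝ) - 1))
        ≤ cost n (lin n) α x := by
  change IsProfile n n (starProfile n _) ∧ ∀ x, IsProfile n n x →
    cost n (lin n) α (starProfile n _) ≤ cost n (lin n) α x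
  have hn' : (2 : ℝ) ≤ n := by exact_mod_cast hn
  have ht1 : max 0 (1 - α * ((n : ℝ) - 1) / (2 * n)) ≤ 1 :=
    max_le zero_le_one (sub_le_self _ (div_nonneg (mul_nonneg hα (by linarith)) (by positivity)))
  refine ⟨isProfile_starProfile hn (le_max_left _ _) (by linarith), fun x ⟨hx0, hxsum⟩ => ?_⟩
  have hx := sq_add_sq_sub_div_le_sum_sq x 0
  rw [hxsum, Fintype.card_fin] at hx
  rw [cost_lin, cost_lin]
  gcongr ?_ / _
  calc ∑ i, starProfile n _ i ^ 2 + α * starProfile n _ 0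
      = reducedCost n α (max 0 (1 - α * ((n : ℝ) - 1) / (2 * n))) := by
        rw [sum_sq_starProfile, starProfile, if_pos rfl, reducedCost]
    _ ≤ reducedCost n α (x 0) := reducedCost_clippedVertex_le (by linarith) (hx0 0)
    _ ≤ ∑ i, x i ^ 2 + α * x 0 := by rw [reducedCost]; linarith
end

section
/- For n ≥ 2 identical linear servers and attack strength α ≥ 0, if the machine penetration level satisfies r ≤ 1 − α(n−1)/n, then every team equilibrium x̃ satisfies C^α(x̃) = min{ n/(n−1), 1 + α/n }, which is at most the cost C^α(x̄) = 1 + α/n of the unresponsive profile x̄ = (1, 1, …, 1). -/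
/-! A machine moves mass away from a server whenever its marginal cost `x + τ^α(x)` exceeds that
of another server, and a selfish job does the same with the delay `τ^α(x)`; on the non-attacked
servers both criteria agree, so they all carry a common load `b`, and the attacked server carries
`a = n - (n - 1) b`. The penetration bound forces `a + α = b`. Selfish jobs on the attacked server
give `a + α ≤ b`, and without them `a ≤ r ≤ 1 - α (n - 1) / n`, which is the same inequality.
Selfish jobs elsewhere give `b ≤ a + α`, and without them `(n - 1) b ≤ r ≤ 1`, so `b ≤ 1 ≤ a`.
Thus all attacked delays are equal, and a profile of total mass `n` with common delay `d` costs
`d = 1 + α / n`. -/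

open Finset

lemma IsProfile.mass_nonneg {n : ℕ} {a : ℝ} {x : Fin n → ℝ} (hx : IsProfile n a x) : 0 ≤ a :=
  hx.2 ▸ sum_nonneg fun i _ => hx.1 i

lemma IsProfile.add_single_sub_single_s7 {n : ℕ} {a ε : ℝ} {x : Fin n → ℝ} (hx : IsProfile n a x)
    (i j : Fin n) (hε : 0 ≤ ε) (hεx : ε ≤ x i) :
    IsProfile n a (x + (Pi.single j ε - Pi.single i ε)) := by
  refine ⟨fun t => ?_, ?_⟩
  · have := hx.1 t
    simp only [Pi.add_apply, Pi.sub_apply, Pi.single_apply]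
    split_ifs <;> subst_vars <;> linarith
  · simp [sum_add_distrib, sum_sub_distrib, hx.2]

lemma nonneg_of_forall_mul_add_sq_nonneg {d M : ℝ} (hM : 0 < M)
    (h : ∀ ε, 0 < ε → ε ≤ M → 0 ≤ ε * d + 2 * ε ^ 2) : 0 ≤ d := by
  by_contra! hd
  have hε := h (min M (-d / 4)) (lt_min hM (by linarith)) (min_le_left _ _)
  have := min_le_right M (-d / 4)
  nlinarith [lt_min hM (by linarith : 0 < -d / 4)]

section Cost

variable {n : ℕ} [NeZero n] (α : ℝ)

lemma cost_eq_sum_mul_tauA (τ : Fin n → ℝ → ℝ) (x : Fin n → ℝ) :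
    cost n τ α x = (∑ i, x i * tauA n τ α i (x i)) / n := by
  simp only [cost, tauA, mul_add, mul_ite, mul_zero, sum_add_distrib, sum_ite_eq', mem_univ,
    ↓reduceIte, add_div, add_right_inj]
  ring

lemma cost_eq_of_tauA_eq {τ : Fin n → ℝ → ℝ} {x : Fin n → ℝ} {d : ℝ} (hx : ∑ i, x i = n)
    (hd : ∀ i, tauA n τ α i (x i) = d) : cost n τ α x = d := by
  have hn : (n : ℝ) ≠ 0 := NeZero.ne _
  simp_rw [cost_eq_sum_mul_tauA, hd, ← sum_mul, hx]
  field_simp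

lemma eq_one_add_div_of_tauA_lin_eq {x : Fin n → ℝ} {d : ℝ} (hx : ∑ i, x i = n)
    (hd : ∀ i, tauA n (lin n) α i (x i) = d) : d = 1 + α / n := by
  have hn : (n : ℝ) ≠ 0 := NeZero.ne _
  have hsum := sum_congr rfl fun i (_ : i ∈ univ) => hd i
  simp only [tauA, lin, sum_add_distrib, hx, sum_ite_eq', mem_univ, ↓reduceIte, sum_const,
    card_univ, Fintype.card_fin, nsmul_eq_mul] at hsum
  field_simp
  linarith

lemma cost_lin_one : cost n (lin n) α (fun _ => 1) = 1 + α / n := by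
  have hn : (n : ℝ) ≠ 0 := NeZero.ne _
  simp [cost, lin, hn]

lemma cost_lin_add (x δ : Fin n → ℝ) :
    n * cost n (lin n) α (x + δ) = n * cost n (lin n) α x
      + ∑ i, δ i * (x i + tauA n (lin n) α i (x i)) + ∑ i, δ i ^ 2 := by
  have hn : (n : ℝ) ≠ 0 := NeZero.ne _
  have hterm : ∀ i, δ i * (x i + tauA n (lin n) α i (x i))
      = 2 * (x i * δ i) + (if i = 0 then α * δ i else 0) := by
    intro i; simp only [tauA, lin]; split_ifs <;> ring
  have hsq : ∀ i, (x + δ) i * (x + δ) i = x i * x i + 2 * (x i * δ i) + δ i ^ 2 :=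
    fun i => by simp only [Pi.add_apply]; ring
  simp only [cost, lin, hterm, hsq, sum_add_distrib, sum_ite_eq', mem_univ, if_true, ← mul_sum]
  field_simp
  simp only [Pi.add_apply]
  ring

lemma cost_lin_add_single_sub_single (x : Fin n → ℝ) {i j : Fin n} (hij : i ≠ j) (ε : ℝ) :
    n * cost n (lin n) α (x + (Pi.single j ε - Pi.single i ε)) = n * cost n (lin n) α x
      + ε * ((x j + tauA n (lin n) α j (x j)) - (x i + tauA n (lin n) α i (x i)))
      + 2 * ε ^ 2 := by
  have hsq : ∀ t, (Pi.single j ε - Pi.single i ε : Fin n → ℝ) t ^ 2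
      = (Pi.single j (ε ^ 2) + Pi.single i (ε ^ 2) : Fin n → ℝ) t := by
    intro t
    simp only [Pi.add_apply, Pi.sub_apply, Pi.single_apply]
    split_ifs <;> simp_all
  rw [cost_lin_add, Fintype.sum_congr _ _ hsq]
  simp only [Pi.sub_apply, Pi.single_apply, sub_mul, ite_mul, zero_mul, sum_sub_distrib,
    sum_ite_eq', mem_univ, ↓reduceIte, Pi.add_apply, sum_add_distrib]
  ring

end Cost

lemma add_sum_apply {n m : ℕ} {M : Type*} [AddCommMonoid M] (xs : Fin n → M)
    (xk : Fin m → Fin n → M) (i : Fin n) : (xs + ∑ k, xk k) i = xs i + ∑ k, xk k i := by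
  simp [Finset.sum_apply]

lemma add_add_sum_erase {n m : ℕ} {M : Type*} [AddCommGroup M] (xs y : Fin n → M)
    (xk : Fin m → Fin n → M) (k : Fin m) :
    xs + y + ∑ l ∈ univ.erase k, xk l = xs + ∑ l, xk l + (y - xk k) := by
  rw [← add_sum_erase _ _ (mem_univ k)]
  abel

lemma sum_erase_zero_of_forall_ne_zero {n : ℕ} [NeZero n] {x : Fin n → ℝ} {b : ℝ}
    (hx : ∀ i, i ≠ 0 → x i = b) : ∑ i ∈ univ.erase 0, x i = (n - 1) * b := by
  rw [sum_congr rfl fun i hi => hx i (ne_of_mem_erase hi), sum_const, card_erase_of_mem (mem_univ _),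
    card_univ, Fintype.card_fin, nsmul_eq_mul, Nat.cast_pred (NeZero.pos n)]

namespace IsTeamEq

variable {n m : ℕ} [NeZero n] {τ : Fin n → ℝ → ℝ} {α : ℝ} {r : Fin m → ℝ}
  {xs : Fin n → ℝ} {xk : Fin m → Fin n → ℝ}

lemma isProfile_load (h : IsTeamEq n m τ α r xs xk) : IsProfile n n (xs + ∑ k, xk k) := by
  refine ⟨fun i => ?_, ?_⟩
  · rw [add_sum_apply]
    exact add_nonneg (h.1.1 i) (sum_nonneg fun k _ => (h.2.1 k).1 i)
  · simp only [add_sum_apply, sum_add_distrib, h.1.2]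
    rw [sum_comm, sum_congr rfl fun k _ => (h.2.1 k).2]
    ring

lemma sum_load_le_of_selfish_eq_zero (h : IsTeamEq n m τ α r xs xk) {s : Finset (Fin n)}
    (hs : ∀ i ∈ s, xs i = 0) : ∑ i ∈ s, (xs + ∑ k, xk k) i ≤ ∑ k, r k := by
  rw [sum_congr rfl fun i hi => by rw [add_sum_apply, hs i hi, zero_add], sum_comm]
  refine sum_le_sum fun k _ => ?_
  rw [← (h.2.1 k).2]
  exact sum_le_sum_of_subset_of_nonneg (subset_univ s) fun i _ _ => (h.2.1 k).1 i

lemma marginal_le_of_machine_pos (h : IsTeamEq n m (lin n) α r xs xk) {k : Fin m} {i : Fin n}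
    (hki : 0 < xk k i) (j : Fin n) :
    (xs + ∑ l, xk l) i + tauA n (lin n) α i ((xs + ∑ l, xk l) i)
      ≤ (xs + ∑ l, xk l) j + tauA n (lin n) α j ((xs + ∑ l, xk l) j) := by
  rcases eq_or_ne i j with rfl | hij
  · rfl
  rw [← sub_nonneg]
  refine nonneg_of_forall_mul_add_sq_nonneg hki fun ε hε hεk => ?_
  have hopt := h.2.2.1 k _ ((h.2.1 k).add_single_sub_single_s7 i j hε.le hεk)
  rw [add_add_sum_erase, add_sub_cancel_left] at hopt
  have hn : (0 : ℝ) < n := by exact_mod_cast Nat.pos_of_ne_zero (NeZero.ne n)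
  have := mul_le_mul_of_nonneg_left hopt hn.le
  rw [cost_lin_add_single_sub_single α _ hij] at this
  linarith

lemma load_le_of_ne_zero (h : IsTeamEq n m (lin n) α r xs xk) {i j : Fin n}
    (hi : i ≠ 0) (hj : j ≠ 0) : (xs + ∑ l, xk l) i ≤ (xs + ∑ l, xk l) j := by
  by_contra! hlt
  have hsel : xs i = 0 := by
    refine (h.1.1 i).antisymm' (not_lt.1 fun hpos => ?_)
    have := h.2.2.2 i hpos j
    simp only [tauA, lin, hi, hj, if_false, add_zero] at this
    linarith
  have hmach : ∀ k, xk k i = 0 := fun k => by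
    refine ((h.2.1 k).1 i).antisymm' (not_lt.1 fun hpos => ?_)
    have := h.marginal_le_of_machine_pos hpos j
    simp only [tauA, lin, hi, hj, if_false, add_zero] at this
    linarith
  have hXi : (xs + ∑ l, xk l) i = 0 := by simp [hsel, hmach]
  linarith [h.isProfile_load.1 j]

lemma load_eq_of_ne_zero (h : IsTeamEq n m (lin n) α r xs xk) {i j : Fin n}
    (hi : i ≠ 0) (hj : j ≠ 0) : (xs + ∑ l, xk l) i = (xs + ∑ l, xk l) j :=
  (h.load_le_of_ne_zero hi hj).antisymm (h.load_le_of_ne_zero hj hi)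

lemma load_zero_add_mul (h : IsTeamEq n m (lin n) α r xs xk) {j : Fin n} (hj : j ≠ 0) :
    (xs + ∑ l, xk l) 0 + (n - 1) * (xs + ∑ l, xk l) j = n := by
  rw [← sum_erase_zero_of_forall_ne_zero fun i hi => h.load_eq_of_ne_zero hi hj,
    add_sum_erase _ _ (mem_univ 0), h.isProfile_load.2]

lemma load_zero_add_le (h : IsTeamEq n m (lin n) α r xs xk) (hn : 2 ≤ n)
    (hpen : ∑ k, r k ≤ 1 - α * ((n : ℝ) - 1) / n) {j : Fin n} (hj : j ≠ 0) :
    (xs + ∑ l, xk l) 0 + α ≤ (xs + ∑ l, xk l) j := by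
  by_cases h0 : 0 < xs 0
  · simpa [tauA, lin, hj] using h.2.2.2 0 h0 j
  have hX0 : (xs + ∑ l, xk l) 0 ≤ ∑ k, r k := by
    simpa using h.sum_load_le_of_selfish_eq_zero (s := {0})
      (by simpa using le_antisymm (not_lt.1 h0) (h.1.1 0))
  have hn1 : (1 : ℝ) < n := by exact_mod_cast hn
  have hpen' : n * (xs + ∑ l, xk l) 0 ≤ n - α * (n - 1) := by
    have := mul_le_mul_of_nonneg_left (hX0.trans hpen) (by positivity : (0 : ℝ) ≤ n)
    rwa [mul_sub, mul_one, mul_div_cancel₀ _ (by positivity)] at this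
  nlinarith [h.load_zero_add_mul hj]

lemma le_load_zero_add (h : IsTeamEq n m (lin n) α r xs xk) (hn : 2 ≤ n) (hα : 0 ≤ α)
    (hpen : ∑ k, r k ≤ 1 - α * ((n : ℝ) - 1) / n) {j : Fin n} (hj : j ≠ 0) :
    (xs + ∑ l, xk l) j ≤ (xs + ∑ l, xk l) 0 + α := by
  by_cases hsel : ∃ i, i ≠ 0 ∧ 0 < xs i
  · obtain ⟨i, hi, hpos⟩ := hsel
    simpa [tauA, lin, hi, h.load_eq_of_ne_zero hi hj] using h.2.2.2 i hpos 0
  push Not at hsel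
  have hn2 : (2 : ℝ) ≤ n := by exact_mod_cast hn
  have hR : (n - 1) * (xs + ∑ l, xk l) j ≤ 1 := calc
    _ = ∑ i ∈ univ.erase 0, (xs + ∑ l, xk l) i :=
      (sum_erase_zero_of_forall_ne_zero fun i hi => h.load_eq_of_ne_zero hi hj).symm
    _ ≤ ∑ k, r k := h.sum_load_le_of_selfish_eq_zero fun i hi =>
      (hsel i (ne_of_mem_erase hi)).antisymm (h.1.1 i)
    _ ≤ 1 := hpen.trans (sub_le_self _ (div_nonneg (mul_nonneg hα (by linarith)) (by positivity)))
  have hXj : (xs + ∑ l, xk l) j ≤ 1 :=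
    (le_mul_of_one_le_left (h.isProfile_load.1 j) (by linarith)).trans hR
  linarith [h.load_zero_add_mul hj]

lemma cost_load (h : IsTeamEq n m (lin n) α r xs xk) (hn : 2 ≤ n) (hα : 0 ≤ α)
    (hpen : ∑ k, r k ≤ 1 - α * ((n : ℝ) - 1) / n) :
    cost n (lin n) α (xs + ∑ l, xk l) = 1 + α / n := by
  obtain ⟨j, hj⟩ : ∃ j : Fin n, j ≠ 0 := ⟨⟨1, hn⟩, by simp [Fin.ext_iff]⟩
  have hdelay : ∀ i, tauA n (lin n) α i ((xs + ∑ l, xk l) i) = (xs + ∑ l, xk l) j := by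
    intro i
    rcases eq_or_ne i 0 with rfl | hi
    · simpa [tauA, lin] using
        (h.load_zero_add_le hn hpen hj).antisymm (h.le_load_zero_add hn hα hpen hj)
    · simpa [tauA, lin, hi] using h.load_eq_of_ne_zero hi hj
  have hX := h.isProfile_load.2
  rw [cost_eq_of_tauA_eq α hX hdelay, eq_one_add_div_of_tauA_lin_eq α hX hdelay]

end IsTeamEq

theorem linear_low_penetration_general (n m : ℕ) [NeZero n] (hn : 2 ≤ n)
    (α : ℝ) (hα : 0 ≤ α)
    (r : Fin m → ℝ)
    (hpen : ∑ k, r k ≤ 1 - α * ((n : ℝ) - 1) / n) :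
    cost n (lin n) α (fun _ : Fin n => (1 : ℝ)) = 1 + α / n ∧
    ∀ (xs : Fin n → ℝ) (xk : Fin m → Fin n → ℝ), IsTeamEq n m (lin n) α r xs xk →
      cost n (lin n) α (xs + ∑ j, xk j) = min ((n : ℝ) / ((n : ℝ) - 1)) (1 + α / n) ∧
      cost n (lin n) α (xs + ∑ j, xk j) ≤ cost n (lin n) α (fun _ : Fin n => (1 : ℝ)) := by
  refine ⟨cost_lin_one α, fun xs xk h => ?_⟩
  have hR : 0 ≤ ∑ k, r k := sum_nonneg fun k _ => (h.2.1 k).mass_nonneg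
  have hn1 : (1 : ℝ) < n := by exact_mod_cast hn
  have hmin : 1 + α / n ≤ n / (n - 1) := by
    rw [le_div_iff₀ (by linarith)]
    linarith [show (1 + α / n) * (n - 1) = n - 1 + α * (n - 1) / n by ring]
  rw [h.cost_load hn hα hpen, min_eq_right hmin, cost_lin_one]
  exact ⟨rfl, le_rfl⟩

/-- with identical linear servers and low machine penetration
`r ≤ 1 − α(n−1)/n`, every team equilibrium has cost `min {n/(n−1), 1 + α/n}`, which is
at most the cost `1 + α/n` of the unresponsive profile `x̄ = (1,…,1)`. -/
theorem linear_low_penetration (n m : ℕ) [NeZero n] (hn : 2 ≤ n) (hm : 1 ≤ m)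
    (α : ℝ) (hα : 0 ≤ α)
    (r : Fin m → ℝ) (hr : ∀ k, 0 ≤ r k) (hrsum : ∑ k, r k ≤ (n : ℝ))
    (hpen : ∑ k, r k ≤ 1 - α * ((n : ℝ) - 1) / n) :
    cost n (lin n) α (fun _ : Fin n => (1 : ℝ)) = 1 + α / n ∧
    ∀ (xs : Fin n → ℝ) (xk : Fin m → Fin n → ℝ), IsTeamEq n m (lin n) α r xs xk →
      cost n (lin n) α (xs + ∑ j, xk j) = min ((n : ℝ) / ((n : ℝ) - 1)) (1 + α / n) ∧
      cost n (lin n) α (xs + ∑ j, xk j) ≤ cost n (lin n) α (fun _ : Fin n => (1 : ℝ)) :=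
  linear_low_penetration_general n m hn α hα r hpen
end

section
/- For n ≥ 2 identical linear servers, any attack strength α ≥ 0, and any machine penetration level, every team equilibrium x̃ has equal loads on all non-attacked servers: x̃_i = x̃_j for all i, j > 1. -/
open Finset

/-! If two non-attacked servers had loads `x i > x j`, the mass on `i` would be either selfish,
contradicting that selfish jobs only use minimum-delay servers, or held by some machine, which
could lower the cost by shifting a little of it to `j`: for linear delays this changes the cost by
`2δ (x j - x i + δ) / n < 0` for small `δ > 0`. -/

def transfer {n : ℕ} (i j : Fin n) (δ : ℝ) : Fin n → ℝ :=
  Pi.single j δ - Pi.single i δ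

theorem IsProfile.add_transfer {n : ℕ} {mass : ℝ} {y : Fin n → ℝ}
    (hy : IsProfile n mass y) {i j : Fin n} {δ : ℝ} (hδ : 0 ≤ δ) (hδy : δ ≤ y i) :
    IsProfile n mass (y + transfer i j δ) := by
  refine ⟨fun l => ?_, ?_⟩
  · have hi : (Pi.single i δ : Fin n → ℝ) l ≤ y l := by
      rcases eq_or_ne l i with rfl | hli
      · simpa using hδy
      · simpa [Pi.single_apply, hli] using hy.1 l
    have hj : 0 ≤ (Pi.single j δ : Fin n → ℝ) l := by
      rcases eq_or_ne l j with rfl | hlj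
      · simpa using hδ
      · simp [hlj]
    simp only [transfer, Pi.add_apply, Pi.sub_apply]
    linarith
  · simp only [transfer, Pi.add_apply, Pi.sub_apply, sum_add_distrib, sum_sub_distrib,
      sum_pi_single', mem_univ, if_true, hy.2]
    ring

theorem cost_lin_add_transfer {n : ℕ} [NeZero n] (α : ℝ) (x : Fin n → ℝ)
    {i j : Fin n} (hi : i ≠ 0) (hj : j ≠ 0) (hij : i ≠ j) (δ : ℝ) :
    cost n (lin n) α (x + transfer i j δ) = cost n (lin n) α x + 2 * δ * (x j - x i + δ) / n := by
  have hsq : ∀ l, (x + transfer i j δ) l * (x + transfer i j δ) l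
      = x l * x l + ((Pi.single j (2 * δ * x j + δ ^ 2) : Fin n → ℝ) l
          + (Pi.single i (-2 * δ * x i + δ ^ 2) : Fin n → ℝ) l) := by
    intro l
    rcases eq_or_ne l i with rfl | hli
    · simp [transfer, hij]; ring
    rcases eq_or_ne l j with rfl | hlj
    · simp [transfer, hli]; ring
    · simp [transfer, hli, hlj]
  simp only [cost, lin, hsq, sum_add_distrib, sum_pi_single', mem_univ, if_true]
  simp [transfer, hi.symm, hj.symm]
  ring

namespace IsTeamEq

variable {n m : ℕ} [NeZero n] {τ : Fin n → ℝ → ℝ} {α : ℝ} {r : Fin m → ℝ}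
  {xs : Fin n → ℝ} {xk : Fin m → Fin n → ℝ}

theorem load_nonneg (heq : IsTeamEq n m τ α r xs xk) (i : Fin n) :
    0 ≤ (xs + ∑ l, xk l) i := by
  simp only [Pi.add_apply, Finset.sum_apply]
  exact add_nonneg (heq.1.1 i) (sum_nonneg fun l _ => (heq.2.1 l).1 i)

theorem cost_le_of_deviation (heq : IsTeamEq n m τ α r xs xk) (k : Fin m) (v : Fin n → ℝ)
    (hv : IsProfile n (r k) (xk k + v)) :
    cost n τ α (xs + ∑ l, xk l) ≤ cost n τ α ((xs + ∑ l, xk l) + v) := by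
  have hdev := heq.2.2.1 k _ hv
  rwa [show xs + (xk k + v) + ∑ l ∈ univ.erase k, xk l
      = xs + (xk k + ∑ l ∈ univ.erase k, xk l) + v by abel,
    add_sum_erase univ xk (mem_univ k)] at hdev

theorem load_le_of_selfish_pos (heq : IsTeamEq n m (lin n) α r xs xk) {i j : Fin n}
    (hi : i ≠ 0) (hj : j ≠ 0) (hxs : 0 < xs i) :
    (xs + ∑ l, xk l) i ≤ (xs + ∑ l, xk l) j := by
  simpa [tauA, lin, hi, hj] using heq.2.2.2 i hxs j

theorem load_le_of_machine_pos (heq : IsTeamEq n m (lin n) α r xs xk) {i j : Fin n}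
    (hi : i ≠ 0) (hj : j ≠ 0) {k : Fin m} (hxk : 0 < xk k i) :
    (xs + ∑ l, xk l) i ≤ (xs + ∑ l, xk l) j := by
  set x := xs + ∑ l, xk l
  by_contra! hlt
  have hij : i ≠ j := by rintro rfl; exact lt_irrefl _ hlt
  set δ := min (xk k i) ((x i - x j) / 2)
  have hδ : 0 < δ := lt_min hxk (by linarith)
  have hprof := (heq.2.1 k).add_transfer (j := j) hδ.le (min_le_left _ _)
  have hcost := heq.cost_le_of_deviation k _ hprof
  rw [cost_lin_add_transfer α x hi hj hij] at hcost
  have hgain : 2 * δ * (x j - x i + δ) < 0 :=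
    mul_neg_of_pos_of_neg (by positivity) (by linarith [min_le_right (xk k i) ((x i - x j) / 2)])
  have hn : (0 : ℝ) < n := by exact_mod_cast Nat.pos_of_ne_zero (NeZero.ne n)
  linarith [div_neg_of_neg_of_pos hgain hn]

theorem load_le (heq : IsTeamEq n m (lin n) α r xs xk) {i j : Fin n} (hi : i ≠ 0) (hj : j ≠ 0) :
    (xs + ∑ l, xk l) i ≤ (xs + ∑ l, xk l) j := by
  by_contra! hlt
  have hpos : 0 < xs i + ∑ l, xk l i := by
    simpa only [Pi.add_apply, Finset.sum_apply] using (heq.load_nonneg j).trans_lt hlt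
  rcases (heq.1.1 i).lt_or_eq with hxs | hxs
  · exact hlt.not_ge (heq.load_le_of_selfish_pos hi hj hxs)
  · obtain ⟨k, -, hxk⟩ := exists_lt_of_sum_lt (s := univ) (f := 0) (g := fun l => xk l i)
      (by simpa [← hxs] using hpos)
    exact hlt.not_ge (heq.load_le_of_machine_pos hi hj hxk)

end IsTeamEq

theorem linear_equal_loads_general (n m : ℕ) [NeZero n]
    (α : ℝ)
    (r : Fin m → ℝ)
    (xs : Fin n → ℝ) (xk : Fin m → Fin n → ℝ)
    (heq : IsTeamEq n m (lin n) α r xs xk) :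
    ∀ i j : Fin n, i ≠ 0 → j ≠ 0 →
      (xs + ∑ l, xk l) i = (xs + ∑ l, xk l) j :=
  fun _ _ hi hj => (heq.load_le hi hj).antisymm (heq.load_le hj hi)

/-- with identical linear servers, every team equilibrium places equal
loads on all non-attacked servers. -/
theorem linear_equal_loads (n m : ℕ) [NeZero n] (hn : 2 ≤ n) (hm : 1 ≤ m)
    (α : ℝ) (hα : 0 ≤ α)
    (r : Fin m → ℝ) (hr : ∀ k, 0 ≤ r k) (hrsum : ∑ k, r k ≤ (n : ℝ))
    (xs : Fin n → ℝ) (xk : Fin m → Fin n → ℝ)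
    (heq : IsTeamEq n m (lin n) α r xs xk) :
    ∀ i j : Fin n, i ≠ 0 → j ≠ 0 →
      (xs + ∑ l, xk l) i = (xs + ∑ l, xk l) j :=
  linear_equal_loads_general n m α r xs xk heq
end

section
/- For n ≥ 2 identical linear servers and any attack strength α ≥ 0, every fully selfish equilibrium x̂ satisfies x̂_1 = max{ 1 − α(n−1)/n, 0 }, x̂_i = (n − x̂_1)/(n−1) for all i > 1, and has cost C^α(x̂) = min{ n/(n−1), 1 + α/n }. -/
open Finset

/-- A fully selfish equilibrium: a scheduling profile of total mass `n` in which every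
job with positive mass is on a server of minimal (attacked) delay. -/
def IsSelfishEq (n : ℕ) [NeZero n] (α : ℝ) (x : Fin n → ℝ) : Prop :=
  IsProfile n (n : ℝ) x ∧
  ∀ i, 0 < x i → ∀ j, tauA n (lin n) α i (x i) ≤ tauA n (lin n) α j (x j)

/-! By symmetry the equilibrium condition forces all unattacked servers to carry the same load
`y`, so the equilibrium reduces to two numbers: the load `a` of the attacked server and `y`.
The unattacked servers are always used, and the attacked one is used only if its delay
`a + α` equals `y`; in either case `a (a + α) = a y`, which makes the cost equal to the
common delay `y`. Solving `a + (n - 1) y = n` in the two cases `a > 0` and `a = 0` gives the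
formulas. -/

theorem eq_of_pos_imp_le {a b : ℝ} (ha : 0 ≤ a) (hb : 0 ≤ b) (hab : 0 < a → a ≤ b)
    (hba : 0 < b → b ≤ a) : a = b := by
  rcases ha.eq_or_lt with rfl | ha
  · rcases hb.eq_or_lt with rfl | hb
    · rfl
    · linarith [hba hb]
  · exact le_antisymm (hab ha) (hba (ha.trans_le (hab ha)))

theorem Finset.sum_univ_eq_add_nsmul_of_forall_ne {ι M : Type*} [Fintype ι] [DecidableEq ι]
    [AddCommMonoid M] {f : ι → M} {c : M} (a : ι) (h : ∀ i, i ≠ a → f i = c) :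
    ∑ i, f i = f a + (Fintype.card ι - 1) • c := by
  rw [← add_sum_erase _ _ (mem_univ a),
    sum_congr rfl fun i hi => h i (ne_of_mem_erase hi), sum_const,
    card_erase_of_mem (mem_univ a), card_univ]

/-- An equilibrium in which the attacked server carries load `a` and each of the other
`n - 1` servers carries load `y`. -/
structure IsTwoClassEq (n α a y : ℝ) : Prop where
  attacked_nonneg : 0 ≤ a
  other_nonneg : 0 ≤ y
  mass : a + (n - 1) * y = n
  other_le : 0 < y → y ≤ a + α
  attacked_le : 0 < a → a + α ≤ y

namespace IsTwoClassEq

variable {n α a y : ℝ}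

theorem other_pos (h : IsTwoClassEq n α a y) (hn : 0 < n) (hα : 0 ≤ α) : 0 < y := by
  refine h.other_nonneg.lt_of_ne fun hy => ?_
  have ha : a = n := by simpa [← hy] using h.mass
  linarith [h.attacked_le (ha ▸ hn)]

theorem attacked_add_eq (h : IsTwoClassEq n α a y) (hn : 0 < n) (hα : 0 ≤ α) (ha : 0 < a) :
    a + α = y :=
  le_antisymm (h.attacked_le ha) (h.other_le (h.other_pos hn hα))

theorem other_eq (h : IsTwoClassEq n α a y) (hn : n ≠ 1) : y = (n - a) / (n - 1) := by
  rw [eq_div_iff (sub_ne_zero.mpr hn)]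
  linarith [h.mass]

theorem attacked_eq_of_pos (h : IsTwoClassEq n α a y) (hn : 0 < n) (hα : 0 ≤ α) (ha : 0 < a) :
    a = 1 - α * (n - 1) / n := by
  have hmass := h.mass
  rw [← h.attacked_add_eq hn hα ha] at hmass
  rw [eq_sub_iff_add_eq]
  field_simp
  linarith

theorem attacked_eq_max (h : IsTwoClassEq n α a y) (hn : 1 < n) (hα : 0 ≤ α) :
    a = max (1 - α * (n - 1) / n) 0 := by
  have hn0 : 0 < n := by linarith
  rcases h.attacked_nonneg.eq_or_lt with rfl | ha
  · have hy : y ≤ α := by simpa using h.other_le (h.other_pos hn0 hα)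
    have hαn : n ≤ α * (n - 1) := by nlinarith [h.mass]
    refine (max_eq_right ?_).symm
    rw [sub_nonpos, le_div_iff₀ hn0]
    linarith
  · rw [← h.attacked_eq_of_pos hn0 hα ha, max_eq_left ha.le]

theorem other_eq_min (h : IsTwoClassEq n α a y) (hn : 1 < n) (hα : 0 ≤ α) :
    y = min (n / (n - 1)) (1 + α / n) := by
  have hn0 : 0 < n := by linarith
  have hn1 : 0 < n - 1 := by linarith
  rcases h.attacked_nonneg.eq_or_lt with rfl | ha
  · have hy : y = n / (n - 1) := by simpa using h.other_eq hn.ne'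
    have hyα : y ≤ α := by simpa using h.other_le (h.other_pos hn0 hα)
    refine hy.trans (min_eq_left ?_).symm
    rw [div_le_iff₀ hn1]
    nlinarith [mul_div_cancel₀ α hn0.ne', div_mul_cancel₀ n hn1.ne']
  · have hy : y = 1 + α / n := by
      rw [← h.attacked_add_eq hn0 hα ha, h.attacked_eq_of_pos hn0 hα ha]
      field_simp
      ring
    refine hy.trans (min_eq_right ?_).symm
    rw [← hy, h.other_eq hn.ne']
    gcongr
    linarith

theorem cost_eq (h : IsTwoClassEq n α a y) (hn : 0 < n) (hα : 0 ≤ α) :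
    (a * a + (n - 1) * (y * y) + α * a) / n = y := by
  have hslack : a * (a + α) = a * y := by
    rcases h.attacked_nonneg.eq_or_lt with rfl | ha
    · simp
    · rw [h.attacked_add_eq hn hα ha]
  rw [div_eq_iff hn.ne']
  linear_combination hslack + y * h.mass

end IsTwoClassEq

namespace IsSelfishEq

variable {n : ℕ} [NeZero n] {α : ℝ} {x : Fin n → ℝ}

theorem other_le_other (hx : IsSelfishEq n α x) {i j : Fin n} (hi : i ≠ 0) (hj : j ≠ 0)
    (hxi : 0 < x i) : x i ≤ x j := by
  simpa [tauA, lin, hi, hj] using hx.2 i hxi j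

theorem other_eq_other (hx : IsSelfishEq n α x) {i j : Fin n} (hi : i ≠ 0) (hj : j ≠ 0) :
    x i = x j :=
  eq_of_pos_imp_le (hx.1.1 i) (hx.1.1 j) (hx.other_le_other hi hj) (hx.other_le_other hj hi)

theorem isTwoClassEq (hx : IsSelfishEq n α x) {i : Fin n} (hi : i ≠ 0) :
    IsTwoClassEq n α (x 0) (x i) where
  attacked_nonneg := hx.1.1 0
  other_nonneg := hx.1.1 i
  mass := by
    have hsum := hx.1.2
    rw [sum_univ_eq_add_nsmul_of_forall_ne 0 fun j hj => hx.other_eq_other hj hi,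
      Fintype.card_fin, nsmul_eq_mul, Nat.cast_pred (Nat.pos_of_neZero n)] at hsum
    exact hsum
  other_le hxi := by simpa [tauA, lin, hi] using hx.2 i hxi 0
  attacked_le hx0 := by simpa [tauA, lin, hi] using hx.2 0 hx0 i

theorem cost_eq (hx : IsSelfishEq n α x) {i : Fin n} (hi : i ≠ 0) :
    cost n (lin n) α x = (x 0 * x 0 + ((n : ℝ) - 1) * (x i * x i) + α * x 0) / n := by
  simp only [cost, lin]
  rw [← add_div, sum_univ_eq_add_nsmul_of_forall_ne 0
      fun j hj => by rw [hx.other_eq_other hj hi], Fintype.card_fin, nsmul_eq_mul,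
    Nat.cast_pred (Nat.pos_of_neZero n)]

end IsSelfishEq

/-- for identical linear servers, every fully selfish equilibrium has
`x̂₁ = max {1 − α(n−1)/n, 0}`, the rest split evenly, and cost
`min {n/(n−1), 1 + α/n}`. -/
theorem selfish_equilibrium_characterization (n : ℕ) [NeZero n] (hn : 2 ≤ n)
    (α : ℝ) (hα : 0 ≤ α) (x : Fin n → ℝ) (hx : IsSelfishEq n α x) :
    x 0 = max (1 - α * ((n : ℝ) - 1) / n) 0 ∧
    (∀ i : Fin n, i ≠ 0 → x i = ((n : ℝ) - x 0) / ((n : ℝ) - 1)) ∧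
    cost n (lin n) α x = min ((n : ℝ) / ((n : ℝ) - 1)) (1 + α / n) := by
  have hn1 : (1 : ℝ) < n := by exact_mod_cast hn
  have hn0 : (0 : ℝ) < n := by linarith
  have hi1 : (⟨1, hn⟩ : Fin n) ≠ 0 := by simp [Fin.ext_iff]
  have h := hx.isTwoClassEq hi1
  refine ⟨h.attacked_eq_max hn1 hα, fun i hi => (hx.isTwoClassEq hi).other_eq hn1.ne', ?_⟩
  rw [hx.cost_eq hi1, h.cost_eq hn0 hα, h.other_eq_min hn1 hα]
end

section
/- In the constrained setting with n ≥ 3 identical linear servers, where a mass 1 of selfish jobs may use only servers 1 and 2 and a mass n−1 of machine-scheduled jobs may use only servers 2 through n, for any attack strength α ≥ 0, every constrained team equilibrium x̃ satisfies C^α(x̃) = min{ n/(n−1), 1 + α/n }, which equals the cost of a fully selfish equilibrium obtained by converting all jobs to selfish jobs (unconstrained among all n servers). -/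
open Finset

/-- Constrained team equilibrium: mass 1 of selfish jobs restricted to servers 1 and 2
(indices 0 and 1), machine schedulers restricted to servers 2,…,n (indices ≠ 0), with
machine masses `r k` summing to `n - 1`. -/
def IsConstrainedTeamEq (n m : ℕ) [NeZero n] (α : ℝ) (r : Fin m → ℝ)
    (xs : Fin n → ℝ) (xk : Fin m → Fin n → ℝ) : Prop :=
  (∀ i, 0 ≤ xs i) ∧ xs 0 + xs 1 = 1 ∧ (∀ i, i ≠ 0 → i ≠ 1 → xs i = 0) ∧
  (∀ k, (∀ i, 0 ≤ xk k i) ∧ xk k 0 = 0 ∧ ∑ i, xk k i = r k) ∧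
  (∀ k, ∀ y : Fin n → ℝ, (∀ i, 0 ≤ y i) → y 0 = 0 → (∑ i, y i) = r k →
    cost n (lin n) α (xs + ∑ j, xk j) ≤ cost n (lin n) α (xs + y + ∑ j ∈ univ.erase k, xk j)) ∧
  (0 < xs 0 → (xs + ∑ l, xk l) 0 + α ≤ (xs + ∑ l, xk l) 1) ∧
  (0 < xs 1 → (xs + ∑ l, xk l) 1 ≤ (xs + ∑ l, xk l) 0 + α)

/-!
Both kinds of equilibrium are "level" profiles: the unattacked servers `i ≠ 0` carry a common
load `M`, and server `0` is loaded only when its attacked delay `x 0 + α` equals `M` (and is at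
least `M` otherwise). For such a profile complementary slackness gives `n · cost = M · n`, and the
two cases `x 0 = 0` and `x 0 + α = M` give `M = n/(n-1)` and `M = 1 + α/n`, the smaller one.

For a team equilibrium, moving a small mass `t` of machine `k` from server `i` to `j` changes the
cost by `2t(x j - x i + t)/n`, so any server `i ≠ 0` used by a machine has minimal load among the
servers `≠ 0`. Servers `≥ 2` carry only machine jobs, so they are all at the minimum `M`; server `1`
is at `M` as well, since otherwise no machine uses it and the total mass could not be `n`. The
selfish jobs then enforce the Wardrop condition at server `0`.
-/

theorem sum_eq_sum_add_mul_of_eq_on_compl {ι R : Type*} [Fintype ι] [CommRing R]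
    (f : ι → R) (s : Finset ι) (c : R) (h : ∀ i ∉ s, f i = c) :
    ∑ i, f i = ∑ i ∈ s, f i + (Fintype.card ι - #s : R) * c := by
  classical
  rw [← sum_add_sum_compl s f, sum_congr rfl fun i hi => h i (mem_compl.1 hi), sum_const,
    card_compl, nsmul_eq_mul, Nat.cast_sub (card_le_univ s)]

theorem Fin.one_ne_zero_of_two_le {n : ℕ} [NeZero n] (hn : 2 ≤ n) : (1 : Fin n) ≠ 0 := by
  intro h
  have := congrArg Fin.val h
  rw [Fin.val_one', Nat.mod_eq_of_lt (by omega), Fin.val_zero] at this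
  exact one_ne_zero this

section Cost

variable {n : ℕ} [NeZero n] {α : ℝ}

theorem tauA_lin_zero (z : ℝ) : tauA n (lin n) α 0 z = z + α := by
  simp [tauA, lin]

theorem tauA_lin_of_ne_zero {i : Fin n} (hi : i ≠ 0) (z : ℝ) : tauA n (lin n) α i z = z := by
  simp [tauA, lin, hi]

theorem le_tauA_lin (hα : 0 ≤ α) (i : Fin n) (z : ℝ) : z ≤ tauA n (lin n) α i z := by
  unfold tauA lin; split_ifs <;> linarith

theorem cost_lin_transfer (x : Fin n → ℝ) {i j : Fin n} (hij : i ≠ j) (hi : i ≠ 0)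
    (hj : j ≠ 0) (t : ℝ) :
    cost n (lin n) α (x + Pi.single j t - Pi.single i t) =
      cost n (lin n) α x + 2 * t * (x j - x i + t) / n := by
  set y := x + Pi.single j t - Pi.single i t
  have hy0 : y 0 = x 0 := by simp [y, hi.symm, hj.symm]
  have hsq : ∑ l, y l * y l = ∑ l, x l * x l + 2 * t * (x j - x i + t) := by
    rw [← sub_eq_iff_eq_add', ← sum_sub_distrib, Fintype.sum_eq_add i j hij]
    · simp [y, hij, hij.symm]; ring
    · rintro l ⟨hli, hlj⟩
      simp [y, hli, hlj]
  simp only [cost, lin, hsq, hy0]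
  ring

end Cost

structure IsLevelProfile (n : ℕ) [NeZero n] (α M : ℝ) (x : Fin n → ℝ) : Prop where
  eq_level : ∀ i, i ≠ 0 → x i = M
  sum_eq : ∑ i, x i = n
  nonneg_zero : 0 ≤ x 0
  level_le : M ≤ x 0 + α
  le_level_of_pos : 0 < x 0 → x 0 + α ≤ M

namespace IsLevelProfile

variable {n : ℕ} [NeZero n] {α M : ℝ} {x : Fin n → ℝ}

theorem zero_add_mul_eq (h : IsLevelProfile n α M x) : x 0 + ((n : ℝ) - 1) * M = n := by
  have := sum_eq_sum_add_mul_of_eq_on_compl x {0} M fun i hi => h.eq_level i (by simpa using hi)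
  simpa [h.sum_eq] using this.symm

theorem cost_eq (h : IsLevelProfile n α M x) : cost n (lin n) α x = M := by
  have hslack : x 0 * (x 0 + α - M) = 0 := by
    rcases h.nonneg_zero.eq_or_lt with h0 | h0
    · rw [← h0, zero_mul]
    · rw [le_antisymm (h.le_level_of_pos h0) h.level_le, sub_self, mul_zero]
  have hsq := sum_eq_sum_add_mul_of_eq_on_compl (fun i => x i * x i) {0} (M * M)
    fun i hi => by rw [h.eq_level i (by simpa using hi)]
  simp only [sum_singleton, card_singleton, Fintype.card_fin, Nat.cast_one] at hsq
  simp only [cost, lin]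
  rw [← add_div, div_eq_iff (NeZero.ne _ : (n : ℝ) ≠ 0), hsq]
  linear_combination hslack + M * h.zero_add_mul_eq

theorem level_eq_min (h : IsLevelProfile n α M x) (hn : 2 ≤ n) :
    M = min ((n : ℝ) / ((n : ℝ) - 1)) (1 + α / n) := by
  have hN : (2 : ℝ) ≤ n := by exact_mod_cast hn
  have hsum := h.zero_add_mul_eq
  have hle_left : M ≤ n / ((n : ℝ) - 1) := by
    rw [le_div_iff₀ (by linarith)]; linarith [h.nonneg_zero]
  have hle_right : M ≤ 1 + α / n := by
    rw [← sub_nonneg, show 1 + α / n - M = (x 0 + α - M) / n by field_simp; linarith]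
    exact div_nonneg (by linarith [h.level_le]) (by linarith)
  refine le_antisymm (le_min hle_left hle_right) ?_
  rcases h.nonneg_zero.eq_or_lt with h0 | h0
  · refine (min_le_left _ _).trans (le_of_eq ?_)
    rw [div_eq_iff (by linarith)]; linarith
  · refine (min_le_right _ _).trans (le_of_eq ?_)
    have hM := le_antisymm (h.le_level_of_pos h0) h.level_le
    field_simp; linarith

end IsLevelProfile

theorem IsSelfishEq.isLevelProfile {n : ℕ} [NeZero n] {α : ℝ} {x : Fin n → ℝ}
    (h : IsSelfishEq n α x) (hn : 2 ≤ n) (hα : 0 ≤ α) : IsLevelProfile n α (x 1) x := by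
  obtain ⟨⟨hnonneg, hsum⟩, hmin⟩ := h
  have h10 := Fin.one_ne_zero_of_two_le hn
  have hpos : ∀ i, i ≠ 0 → 0 < x i := by
    intro i hi
    refine (hnonneg i).lt_of_ne fun hxi => ?_
    obtain ⟨j, -, hj⟩ := exists_lt_of_sum_lt (s := univ) (f := 0) (g := x)
      (by simpa [hsum] using NeZero.pos n)
    have := hmin j hj i
    rw [tauA_lin_of_ne_zero hi, ← hxi] at this
    linarith [le_tauA_lin hα j (x j), show 0 < x j from hj]
  have hmin' := fun i hi j => hmin i (hpos i hi) j
  refine ⟨fun i hi => le_antisymm ?_ ?_, hsum, hnonneg 0, ?_, fun h0 => ?_⟩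
  · simpa [tauA_lin_of_ne_zero, hi, h10] using hmin' i hi 1
  · simpa [tauA_lin_of_ne_zero, hi, h10] using hmin' 1 h10 i
  · simpa [tauA_lin_of_ne_zero, tauA_lin_zero, h10] using hmin' 1 h10 0
  · simpa [tauA_lin_of_ne_zero, tauA_lin_zero, h10] using hmin 0 h0 1

namespace IsConstrainedTeamEq

variable {n m : ℕ} [NeZero n] {α : ℝ} {r : Fin m → ℝ} {xs : Fin n → ℝ}
  {xk : Fin m → Fin n → ℝ}

theorem total_nonneg (h : IsConstrainedTeamEq n m α r xs xk) (t : Fin n) :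
    0 ≤ (xs + ∑ k, xk k) t := by
  rw [Pi.add_apply, Finset.sum_apply]
  exact add_nonneg (h.1 t) (sum_nonneg fun k _ => (h.2.2.2.1 k).1 t)

theorem total_zero (h : IsConstrainedTeamEq n m α r xs xk) : (xs + ∑ k, xk k) 0 = xs 0 := by
  rw [Pi.add_apply, Finset.sum_apply, sum_eq_zero fun k _ => (h.2.2.2.1 k).2.1, add_zero]

theorem sum_total (h : IsConstrainedTeamEq n m α r xs xk) (hn : 2 ≤ n)
    (hrsum : ∑ k, r k = (n : ℝ) - 1) : ∑ t, (xs + ∑ k, xk k) t = n := by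
  have h10 := Fin.one_ne_zero_of_two_le hn
  have hxs := sum_eq_sum_add_mul_of_eq_on_compl xs {0, 1} 0 fun i hi => by
    simp only [mem_insert, mem_singleton, not_or] at hi
    exact h.2.2.1 i hi.1 hi.2
  rw [mul_zero, add_zero, sum_pair h10.symm, h.2.1] at hxs
  simp_rw [Pi.add_apply, Finset.sum_apply, sum_add_distrib, hxs]
  rw [sum_comm, sum_congr rfl fun k _ => (h.2.2.2.1 k).2.2, hrsum]
  ring

theorem total_le_of_xk_pos (h : IsConstrainedTeamEq n m α r xs xk) {k : Fin m} {i j : Fin n}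
    (hk : 0 < xk k i) (hi : i ≠ 0) (hj : j ≠ 0) :
    (xs + ∑ k, xk k) i ≤ (xs + ∑ k, xk k) j := by
  obtain ⟨-, -, -, hxk, hopt, -, -⟩ := h
  rcases eq_or_ne i j with rfl | hij
  · rfl
  set x := xs + ∑ k, xk k
  have hgap : ∀ t, 0 < t → t ≤ xk k i → 0 ≤ x j - x i + t := by
    intro t ht hti
    set y := xk k + Pi.single j t - Pi.single i t
    have hy_nonneg : ∀ l, 0 ≤ y l := by
      intro l
      rcases eq_or_ne l i with rfl | hli
      · simp [y, hij]; linarith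
      · simp only [y, Pi.add_apply, Pi.sub_apply, Pi.single_eq_of_ne hli, sub_zero]
        exact add_nonneg ((hxk k).1 l) ((Pi.single_nonneg.2 ht.le : (0 : Fin n → ℝ) ≤ _) l)
    have hy_zero : y 0 = 0 := by simp [y, (hxk k).2.1, hi.symm, hj.symm]
    have hy_sum : ∑ l, y l = r k := by simp [y, sum_add_distrib, sum_sub_distrib, (hxk k).2.2]
    have hprofile : xs + y + ∑ l ∈ univ.erase k, xk l = x + Pi.single j t - Pi.single i t := by
      simp only [x, y, ← add_sum_erase _ _ (mem_univ k)]; abel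
    have hcost := hopt k y hy_nonneg hy_zero hy_sum
    rw [hprofile, cost_lin_transfer x hij hi hj, le_add_iff_nonneg_right] at hcost
    have hn : (0 : ℝ) < n := by exact_mod_cast NeZero.pos n
    rw [le_div_iff₀ hn, zero_mul] at hcost
    exact nonneg_of_mul_nonneg_right hcost (by positivity)
  refine le_of_forall_pos_le_add fun ε hε => ?_
  linarith [hgap (min ε (xk k i)) (lt_min hε hk) (min_le_right _ _), min_le_left ε (xk k i)]

theorem total_le_of_sum_xk_pos (h : IsConstrainedTeamEq n m α r xs xk) {i j : Fin n}
    (hload : 0 < ∑ k, xk k i) (hi : i ≠ 0) (hj : j ≠ 0) :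
    (xs + ∑ k, xk k) i ≤ (xs + ∑ k, xk k) j := by
  obtain ⟨k, -, hk⟩ := exists_lt_of_sum_lt (s := univ) (f := 0) (g := fun k => xk k i)
    (by simpa using hload)
  exact h.total_le_of_xk_pos hk hi hj

theorem total_le_of_ne_zero_of_ne_one (h : IsConstrainedTeamEq n m α r xs xk) {i j : Fin n}
    (hi₀ : i ≠ 0) (hi₁ : i ≠ 1) (hj : j ≠ 0) :
    (xs + ∑ k, xk k) i ≤ (xs + ∑ k, xk k) j := by
  have hxi : (xs + ∑ k, xk k) i = ∑ k, xk k i := by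
    rw [Pi.add_apply, Finset.sum_apply, h.2.2.1 i hi₀ hi₁, zero_add]
  rcases (h.total_nonneg i).eq_or_lt with h0 | hpos
  · exact h0 ▸ h.total_nonneg j
  · exact h.total_le_of_sum_xk_pos (hxi ▸ hpos) hi₀ hj

theorem total_eq_of_ne_zero (h : IsConstrainedTeamEq n m α r xs xk) (hn : 3 ≤ n)
    (hrsum : ∑ k, r k = (n : ℝ) - 1) {i : Fin n} (hi : i ≠ 0) :
    (xs + ∑ k, xk k) i = (xs + ∑ k, xk k) ⟨2, by omega⟩ := by
  have h10 := Fin.one_ne_zero_of_two_le (n := n) (by omega)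
  have h20 : (⟨2, by omega⟩ : Fin n) ≠ 0 := Fin.ne_of_val_ne (by simp)
  have h21 : (⟨2, by omega⟩ : Fin n) ≠ 1 :=
    Fin.ne_of_val_ne (by rw [Fin.val_one', Nat.mod_eq_of_lt (by omega)]; simp)
  have hrest : ∀ i, i ≠ 0 → i ≠ 1 → (xs + ∑ k, xk k) i = (xs + ∑ k, xk k) ⟨2, by omega⟩ :=
    fun i hi₀ hi₁ => le_antisymm (h.total_le_of_ne_zero_of_ne_one hi₀ hi₁ h20)
      (h.total_le_of_ne_zero_of_ne_one h20 h21 hi₀)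
  rcases eq_or_ne i 1 with rfl | hi₁
  · refine le_antisymm ?_ (h.total_le_of_ne_zero_of_ne_one h20 h21 h10)
    rcases (sum_nonneg fun k _ => (h.2.2.2.1 k).1 1 : (0 : ℝ) ≤ ∑ k, xk k 1).eq_or_lt
      with hload | hload
    -- no machine job on server `1`: then `x 0 + x 1 = 1`, so the other `n - 2` servers share
    -- `n - 1`, whereas `x 2 ≤ x 1 ≤ 1`
    · have hsum := sum_eq_sum_add_mul_of_eq_on_compl (xs + ∑ k, xk k) {0, 1}
        ((xs + ∑ k, xk k) ⟨2, by omega⟩) fun i hi => by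
        simp only [mem_insert, mem_singleton, not_or] at hi
        exact hrest i hi.1 hi.2
      have hx1 : (xs + ∑ k, xk k) 1 = xs 1 := by
        rw [Pi.add_apply, Finset.sum_apply, ← hload, add_zero]
      have hn' : (3 : ℝ) ≤ n := by exact_mod_cast hn
      rw [h.sum_total (by omega) hrsum, sum_pair h10.symm, h.total_zero, hx1, h.2.1,
        card_pair h10.symm, Fintype.card_fin, Nat.cast_ofNat] at hsum
      have hM : (xs + ∑ k, xk k) ⟨2, by omega⟩ ≤ 1 := by
        linarith [hx1 ▸ h.total_le_of_ne_zero_of_ne_one h20 h21 h10, h.1 0, h.2.1]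
      nlinarith
    · exact h.total_le_of_sum_xk_pos hload h10 h20
  · exact hrest i hi hi₁

theorem isLevelProfile (h : IsConstrainedTeamEq n m α r xs xk) (hn : 3 ≤ n) (hα : 0 ≤ α)
    (hrsum : ∑ k, r k = (n : ℝ) - 1) :
    IsLevelProfile n α ((xs + ∑ k, xk k) ⟨2, by omega⟩) (xs + ∑ k, xk k) := by
  have h10 := Fin.one_ne_zero_of_two_le (n := n) (by omega)
  have hflat := fun i (hi : i ≠ 0) => h.total_eq_of_ne_zero hn hrsum hi
  have hsum := h.sum_total (by omega) hrsum
  have hzero := h.total_zero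
  obtain ⟨hxs, hxs01, -, -, -, hsel₀, hsel₁⟩ := h
  refine ⟨hflat, hsum, hzero ▸ hxs 0, ?_, ?_⟩
  · rw [← hflat 1 h10]
    rcases (hxs 1).eq_or_lt with hxs1 | hxs1
    · have hM := sum_eq_sum_add_mul_of_eq_on_compl _ {0} _ fun i hi =>
        hflat i (by simpa using hi)
      have hxs0 : xs 0 = 1 := by linarith
      rw [hsum, sum_singleton, card_singleton, Fintype.card_fin, Nat.cast_one, hzero, hxs0,
        ← hflat 1 h10] at hM
      have hn1 : (n - 1 : ℝ) ≠ 0 := by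
        have : (3 : ℝ) ≤ n := by exact_mod_cast hn
        linarith
      rw [mul_left_cancel₀ hn1 (by linarith : (n - 1 : ℝ) * (xs + ∑ k, xk k) 1 = (n - 1) * 1),
        hzero, hxs0]
      linarith
    · exact hsel₁ hxs1
  · rw [← hflat 1 h10]
    exact hzero ▸ hsel₀

end IsConstrainedTeamEq

theorem constrained_team_eq_cost_general (n m : ℕ) [NeZero n] (hn : 3 ≤ n)
    (α : ℝ) (hα : 0 ≤ α)
    (r : Fin m → ℝ) (hrsum : ∑ k, r k = (n : ℝ) - 1)
    (xs : Fin n → ℝ) (xk : Fin m → Fin n → ℝ)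
    (heq : IsConstrainedTeamEq n m α r xs xk) :
    cost n (lin n) α (xs + ∑ j, xk j) = min ((n : ℝ) / ((n : ℝ) - 1)) (1 + α / n) ∧
    ∀ xhat : Fin n → ℝ, IsSelfishEq n α xhat →
      cost n (lin n) α xhat = min ((n : ℝ) / ((n : ℝ) - 1)) (1 + α / n) := by
  have hlevel := heq.isLevelProfile hn hα hrsum
  refine ⟨by rw [hlevel.cost_eq, hlevel.level_eq_min (by omega)], fun xhat hxhat => ?_⟩
  have hlevel' := hxhat.isLevelProfile (by omega) hα
  rw [hlevel'.cost_eq, hlevel'.level_eq_min (by omega)]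

/-- in the constrained setting, every constrained team equilibrium has
cost `min {n/(n−1), 1 + α/n}`, equal to the cost of any fully selfish equilibrium. -/
theorem constrained_team_eq_cost (n m : ℕ) [NeZero n] (hn : 3 ≤ n) (hm : 1 ≤ m)
    (α : ℝ) (hα : 0 ≤ α)
    (r : Fin m → ℝ) (hr : ∀ k, 0 ≤ r k) (hrsum : ∑ k, r k = (n : ℝ) - 1)
    (xs : Fin n → ℝ) (xk : Fin m → Fin n → ℝ)
    (heq : IsConstrainedTeamEq n m α r xs xk) :
    cost n (lin n) α (xs + ∑ j, xk j) = min ((n : ℝ) / ((n : ℝ) - 1)) (1 + α / n) ∧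
    ∀ xhat : Fin n → ℝ, IsSelfishEq n α xhat →
      cost n (lin n) α xhat = min ((n : ℝ) / ((n : ℝ) - 1)) (1 + α / n) :=
  constrained_team_eq_cost_general n m hn α hα r hrsum xs xk heq
end

section
/- In the constrained setting with n ≥ 3 identical linear servers, every constrained team equilibrium x̃ has equal loads on all non-attacked servers (x̃_i = x̃_j for all i, j > 1) and x̃_1 = max{ 1 − α(n−1)/n, 0 }. -/
open Finset

/-- Generic two-point replacement lemma for sums over `Fin n`. -/
lemma sum_two {n : ℕ} (f : Fin n → ℝ) (φ : ℝ → ℝ) (a b : Fin n) (hab : a ≠ b)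
    (u v : ℝ) :
    ∑ t, φ (if t = a then u else if t = b then v else f t)
      = ∑ t, φ (f t) - φ (f a) - φ (f b) + φ u + φ v := by
  rw [← Finset.add_sum_erase _ _ (mem_univ a),
      ← Finset.add_sum_erase _ (fun t => φ (if t = a then u else if t = b then v else f t))
        (Finset.mem_erase.mpr ⟨hab.symm, mem_univ b⟩)]
  rw [← Finset.add_sum_erase _ (fun t => φ (f t)) (mem_univ a),
      ← Finset.add_sum_erase _ (fun t => φ (f t))
        (Finset.mem_erase.mpr ⟨hab.symm, mem_univ b⟩)]
  have h : ∑ t ∈ (univ.erase a).erase b, φ (if t = a then u else if t = b then v else f t)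
      = ∑ t ∈ (univ.erase a).erase b, φ (f t) := by
    apply Finset.sum_congr rfl
    intro t ht
    simp only [Finset.mem_erase] at ht
    rw [if_neg ht.2.1, if_neg ht.1]
  rw [h]
  simp only [if_pos rfl, if_neg hab, if_neg (hab.symm), if_true]
  ring

lemma sum_two_sq {n : ℕ} (f : Fin n → ℝ) (a b : Fin n) (hab : a ≠ b) (u v : ℝ) :
    ∑ t, (if t = a then u else if t = b then v else f t)
        * (if t = a then u else if t = b then v else f t)
      = ∑ t, f t * f t - f a * f a - f b * f b + u * u + v * v :=
  sum_two f (fun z => z * z) a b hab u v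

lemma sum_two_id {n : ℕ} (f : Fin n → ℝ) (a b : Fin n) (hab : a ≠ b) (u v : ℝ) :
    ∑ t, (if t = a then u else if t = b then v else f t)
      = ∑ t, f t - f a - f b + u + v :=
  sum_two f (fun z => z) a b hab u v

/-- in the constrained setting, every constrained team equilibrium has
equal loads on all non-attacked servers, and load `max {1 − α(n−1)/n, 0}` on the
attacked server. -/
theorem constrained_team_eq_loads (n m : ℕ) [NeZero n] (hn : 3 ≤ n) (hm : 1 ≤ m)
    (α : ℝ) (hα : 0 ≤ α)
    (r : Fin m → ℝ) (hr : ∀ k, 0 ≤ r k) (hrsum : ∑ k, r k = (n : ℝ) - 1)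
    (xs : Fin n → ℝ) (xk : Fin m → Fin n → ℝ)
    (heq : IsConstrainedTeamEq n m α r xs xk) :
    (∀ i j : Fin n, i ≠ 0 → j ≠ 0 → (xs + ∑ l, xk l) i = (xs + ∑ l, xk l) j) ∧
    (xs + ∑ l, xk l) 0 = max (1 - α * ((n : ℝ) - 1) / n) 0 := by
  obtain ⟨hxs0, hxs01, hxszero, hxk, hopt, hsel1, hsel2⟩ := heq
  have hnR : (3 : ℝ) ≤ (n : ℝ) := by exact_mod_cast hn
  have hnpos : (0 : ℝ) < (n : ℝ) := by linarith
  have h01 : (0 : Fin n) ≠ 1 := by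
    intro h
    have h2 := congrArg Fin.val h
    rw [Fin.val_zero, Fin.val_one' n, Nat.mod_eq_of_lt (by omega)] at h2
    omega
  set X : Fin n → ℝ := xs + ∑ l, xk l with hXdef
  have hXeval : ∀ t, X t = xs t + ∑ l, xk l t := by
    intro t; simp [hXdef, Finset.sum_apply]
  have hX0 : X 0 = xs 0 := by
    rw [hXeval 0]
    have : ∑ l, xk l 0 = 0 := Finset.sum_eq_zero fun l _ => (hxk l).2.1
    rw [this, add_zero]
  have hXnonneg : ∀ t, 0 ≤ X t := by
    intro t
    rw [hXeval t]
    have : 0 ≤ ∑ l, xk l t := Finset.sum_nonneg fun l _ => (hxk l).1 t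
    linarith [hxs0 t]
  -- the key exchange lemma
  have key : ∀ a b : Fin n, a ≠ 0 → b ≠ 0 → (∃ k, 0 < xk k a) → X a ≤ X b := by
    intro a b ha hb ⟨k, hk⟩
    rcases eq_or_ne a b with rfl | hab
    · exact le_refl _
    have step : ∀ ε : ℝ, 0 < ε → ε ≤ xk k a → X a ≤ X b + ε := by
      intro ε hε hεle
      set y : Fin n → ℝ :=
        fun t => if t = a then xk k a - ε else if t = b then xk k b + ε else xk k t with hy
      have hy0 : ∀ i, 0 ≤ y i := by
        intro i
        rw [hy]
        dsimp only
        split_ifs with h1 h2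
        · linarith
        · linarith [(hxk k).1 b]
        · exact (hxk k).1 i
      have hy00 : y 0 = 0 := by
        rw [hy]
        dsimp only
        rw [if_neg (Ne.symm ha), if_neg (Ne.symm hb)]
        exact (hxk k).2.1
      have hysum : ∑ i, y i = r k := by
        rw [hy]
        dsimp only
        rw [sum_two_id (xk k) a b hab]
        have := (hxk k).2.2
        linarith
      have hco := hopt k y hy0 hy00 hysum
      have hX' : ∀ t, (xs + y + ∑ j ∈ univ.erase k, xk j) t
          = if t = a then X a - ε else if t = b then X b + ε else X t := by
        intro t
        have herase : ∑ j ∈ univ.erase k, xk j t = (∑ l, xk l t) - xk k t := by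
          have h := Finset.add_sum_erase univ (fun l => xk l t) (mem_univ k)
          linarith
        have hev : (xs + y + ∑ j ∈ univ.erase k, xk j) t
            = xs t + y t + ∑ j ∈ univ.erase k, xk j t := by
          simp [Finset.sum_apply]
        rw [hev, herase, hy]
        dsimp only
        by_cases h1 : t = a
        · subst h1
          rw [if_pos rfl, if_pos rfl, hXeval t]
          ring
        · rw [if_neg h1, if_neg h1]
          by_cases h2 : t = b
          · subst h2
            rw [if_pos rfl, if_pos rfl, hXeval t]
            ring
          · rw [if_neg h2, if_neg h2, hXeval t]
            ring
      have hrhs : cost n (lin n) α (xs + y + ∑ j ∈ univ.erase k, xk j)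
          = ((∑ t, X t * X t) - X a * X a - X b * X b
              + (X a - ε) * (X a - ε) + (X b + ε) * (X b + ε)) / n + α * X 0 / n := by
        simp only [cost, lin]
        have h0 : (xs + y + ∑ j ∈ univ.erase k, xk j) 0 = X 0 := by
          rw [hX' 0, if_neg (Ne.symm ha), if_neg (Ne.symm hb)]
        rw [h0]
        congr 2
        rw [Finset.sum_congr rfl (fun t _ => by rw [hX' t])]
        exact sum_two_sq X a b hab _ _
      have hlhs : cost n (lin n) α X = (∑ t, X t * X t) / n + α * X 0 / n := by
        simp only [cost, lin]
      rw [hlhs, hrhs] at hco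
      have hAB : (∑ t, X t * X t) ≤ (∑ t, X t * X t) - X a * X a - X b * X b
          + (X a - ε) * (X a - ε) + (X b + ε) * (X b + ε) := by
        have h2 : (∑ t, X t * X t) / n ≤ ((∑ t, X t * X t) - X a * X a - X b * X b
            + (X a - ε) * (X a - ε) + (X b + ε) * (X b + ε)) / n := by linarith
        exact (div_le_div_iff_of_pos_right hnpos).mp h2
      nlinarith [hε]
    refine le_of_forall_pos_le_add fun ε hε => ?_
    have h1 := step (min ε (xk k a)) (lt_min hε hk) (min_le_right _ _)
    have := min_le_left ε (xk k a)
    linarith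
  -- there is a machine with positive mass on some non-attacked server
  obtain ⟨k₀, hk₀⟩ : ∃ k, 0 < r k := by
    by_contra h
    push_neg at h
    have : ∑ k, r k ≤ 0 := Finset.sum_nonpos fun k _ => h k
    linarith [hrsum]
  obtain ⟨a₀, ha₀⟩ : ∃ i, 0 < xk k₀ i := by
    by_contra h
    push_neg at h
    have : ∑ i, xk k₀ i ≤ 0 := Finset.sum_nonpos fun i _ => h i
    rw [(hxk k₀).2.2] at this
    linarith
  have ha₀0 : a₀ ≠ 0 := by
    intro h; rw [h, (hxk k₀).2.1] at ha₀; linarith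
  set lam : ℝ := X a₀ with hlam
  have hlam_le : ∀ b : Fin n, b ≠ 0 → lam ≤ X b := fun b hb => key a₀ b ha₀0 hb ⟨k₀, ha₀⟩
  have hlam_pos : 0 < lam := by
    rw [hlam, hXeval a₀]
    have h1 : xk k₀ a₀ ≤ ∑ l, xk l a₀ :=
      Finset.single_le_sum (fun l _ => (hxk l).1 a₀) (mem_univ k₀)
    linarith [hxs0 a₀]
  -- non-attacked, non-selfish servers all carry load lam
  have hge2 : ∀ b : Fin n, b ≠ 0 → b ≠ 1 → X b = lam := by
    intro b hb0 hb1
    have hge := hlam_le b hb0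
    have hpos : 0 < ∑ l, xk l b := by
      rw [hXeval b, hxszero b hb0 hb1, zero_add] at hge
      linarith
    obtain ⟨l, hl⟩ : ∃ l, 0 < xk l b := by
      by_contra h
      push_neg at h
      have : ∑ l, xk l b ≤ 0 := Finset.sum_nonpos fun l _ => h l
      linarith
    have := key b a₀ hb0 ha₀0 ⟨l, hl⟩
    linarith
  -- total load is n
  have hxs_sum : ∑ t, xs t = 1 := by
    rw [← Finset.add_sum_erase _ xs (mem_univ (0 : Fin n)),
        ← Finset.add_sum_erase _ xs (Finset.mem_erase.mpr ⟨h01.symm, mem_univ 1⟩)]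
    have hz : ∑ t ∈ (univ.erase (0 : Fin n)).erase 1, xs t = 0 := by
      apply Finset.sum_eq_zero
      intro t ht
      simp only [Finset.mem_erase] at ht
      exact hxszero t ht.2.1 ht.1
    rw [hz]
    linarith
  have hXsum : ∑ t, X t = (n : ℝ) := by
    have h1 : ∑ t, X t = ∑ t, xs t + ∑ t, ∑ l, xk l t := by
      rw [← Finset.sum_add_distrib]
      exact Finset.sum_congr rfl fun t _ => hXeval t
    rw [h1, hxs_sum, Finset.sum_comm]
    have h2 : ∀ l : Fin m, ∑ t, xk l t = r l := fun l => (hxk l).2.2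
    rw [Finset.sum_congr rfl fun l _ => h2 l, hrsum]
    ring
  -- split the total sum
  have hmem1 : (1 : Fin n) ∈ univ.erase (0 : Fin n) :=
    Finset.mem_erase.mpr ⟨h01.symm, mem_univ 1⟩
  have hcardS : (((univ.erase (0 : Fin n)).erase 1).card : ℝ) = (n : ℝ) - 2 := by
    rw [Finset.card_erase_of_mem hmem1, Finset.card_erase_of_mem (mem_univ (0 : Fin n)),
        Finset.card_univ, Fintype.card_fin]
    rw [show n - 1 - 1 = n - 2 from by omega, Nat.cast_sub (by omega)]
    norm_num
  have hsplit : X 0 + X 1 + ((n : ℝ) - 2) * lam = (n : ℝ) := by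
    have h1 : ∑ t ∈ (univ.erase (0 : Fin n)).erase 1, X t = ((n : ℝ) - 2) * lam := by
      have h2 : ∑ t ∈ (univ.erase (0 : Fin n)).erase 1, X t
          = ∑ _t ∈ (univ.erase (0 : Fin n)).erase 1, lam := by
        apply Finset.sum_congr rfl
        intro t ht
        simp only [Finset.mem_erase] at ht
        exact hge2 t ht.2.1 ht.1
      rw [h2, Finset.sum_const, nsmul_eq_mul, hcardS]
    have h3 := hXsum
    rw [← Finset.add_sum_erase _ X (mem_univ (0 : Fin n)),
        ← Finset.add_sum_erase _ X hmem1, h1] at h3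
    linarith
  -- server 1 also carries load lam
  have h1lam : X 1 = lam := by
    by_contra hne
    have hgt : lam < X 1 := lt_of_le_of_ne (hlam_le 1 h01.symm) (Ne.symm hne)
    have hno : ∀ l, xk l 1 = 0 := by
      intro l
      by_contra h
      have hpos : 0 < xk l 1 := lt_of_le_of_ne ((hxk l).1 1) (Ne.symm h)
      have := key 1 a₀ h01.symm ha₀0 ⟨l, hpos⟩
      linarith
    have hX1 : X 1 = xs 1 := by
      rw [hXeval 1, Finset.sum_eq_zero fun l _ => hno l, add_zero]
    have hX1le : X 1 ≤ 1 := by rw [hX1]; linarith [hxs0 0]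
    have hX01 : X 0 + X 1 = 1 := by rw [hX0, hX1]; exact hxs01
    -- then (n-2) lam = n - 1, lam ≤ X 1 ≤ 1, contradiction
    have hl2 : ((n : ℝ) - 2) * lam = (n : ℝ) - 1 := by linarith
    nlinarith [hlam_le 1 h01.symm]
  have hall : ∀ b : Fin n, b ≠ 0 → X b = lam := by
    intro b hb
    by_cases h : b = 1
    · rw [h]; exact h1lam
    · exact hge2 b hb h
  constructor
  · intro i j hi hj
    rw [hall i hi, hall j hj]
  -- the load on the attacked server
  have hbal : X 0 + ((n : ℝ) - 1) * lam = (n : ℝ) := by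
    rw [h1lam] at hsplit; linarith
  rcases lt_or_eq_of_le (hxs0 0) with hs | hs
  · -- xs 0 > 0
    have hs1 := hsel1 hs
    rw [h1lam] at hs1
    rcases lt_or_eq_of_le (hxs0 1) with ht | ht
    · -- xs 1 > 0 : lam = X 0 + α
      have hs2 := hsel2 ht
      rw [h1lam] at hs2
      have hlameq : lam = X 0 + α := le_antisymm hs2 hs1
      have hval : X 0 = 1 - α * ((n : ℝ) - 1) / n := by
        have h2 : X 0 * (n : ℝ) = (n : ℝ) - α * ((n : ℝ) - 1) := by
          rw [hlameq] at hbal; nlinarith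
        field_simp
        linarith
      rw [hval, max_eq_left]
      rw [← hval, hX0]
      linarith
    · -- xs 1 = 0, so xs 0 = 1
      have hxs0eq : xs 0 = 1 := by linarith
      have hX0eq : X 0 = 1 := by rw [hX0, hxs0eq]
      have hlam1 : lam = 1 := by
        rw [hX0eq] at hbal
        have hne : (n : ℝ) - 1 ≠ 0 := by linarith
        have h2 : ((n : ℝ) - 1) * lam = ((n : ℝ) - 1) * 1 := by linarith
        exact mul_left_cancel₀ hne h2
      have hα0 : α = 0 := by
        rw [hX0eq, hlam1] at hs1
        linarith
      rw [hX0eq, hα0]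
      norm_num
  · -- xs 0 = 0
    have hX0eq : X 0 = 0 := by rw [hX0, ← hs]
    have hxs1 : 0 < xs 1 := by linarith
    have hs2 := hsel2 hxs1
    rw [h1lam, hX0eq, zero_add] at hs2
    have hlamval : ((n : ℝ) - 1) * lam = (n : ℝ) := by rw [hX0eq] at hbal; linarith
    rw [hX0eq, max_eq_right]
    rw [sub_nonpos, le_div_iff₀ hnpos]
    have hmul := mul_le_mul_of_nonneg_right hs2 (by linarith : (0:ℝ) ≤ (n:ℝ) - 1)
    linarith [hmul, hlamval]
end
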